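/- arXiv:2407.01105 — 9 statements merged into one kernel-verified Lean document; each statement's English description precedes it below -/
import Mathlib

section
/- Let p be an odd prime, let 1 ≤ s ≤ p−1 and 1 ≤ t ≤ p−1 be relatively prime integers, and set α := s/t. Let a, b ∈ K[[X]] and, for each integer m ≥ 2, c_m ∈ K[[X]] be formal power series such that ‖a‖_r ≤ r/p, ‖b‖_r ≤ r/p and ‖c_m‖_r ≤ 1/p for all m ≥ 2, for some real number r with 0 < r ≤ 1. Suppose in addition that a(0) = a′(0) = 0 and b(0) = 0. Then there exists a unique formal power series y ∈ K[[X]] with y(0) = y′(0) = 0 satisfying the differential equation X·y′ + α·y = a + b·y + ∑_{m≥2} c_m·y^m (the sum on the right-hand side converges coefficientwise in K[[X]], since y has vanishing constant and linear coefficients, so y^m has order ≥ 2m). -/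
open PowerSeries

/-- The coefficientwise-convergent sum `∑_{m ≥ 2} c_m · y^m`: since `y` has vanishing
constant coefficient, `y^m` has order `≥ m`, so the coefficient of `X^n` only receives
contributions from `2 ≤ m ≤ n`. -/
noncomputable def seriesSum {K : Type*} [Field K] (c : ℕ → PowerSeries K)
    (y : PowerSeries K) : PowerSeries K :=
  PowerSeries.mk fun n => ∑ m ∈ Finset.Icc 2 n, PowerSeries.coeff n (c m * y ^ m)

section Aux

variable {K : Type*} [Field K]

lemma coeff_X_mul_dX (f : PowerSeries K) (n : ℕ) :
    coeff n (X * (d⁄dX K) f) = n * coeff n f := by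
  cases n with
  | zero =>
      simp [coeff_zero_eq_constantCoeff, map_mul]
  | succ k =>
      rw [PowerSeries.coeff_succ_X_mul, PowerSeries.coeff_derivative]
      push_cast
      ring

lemma pow_coeff_congr {y z : PowerSeries K} (hy : coeff 0 y = 0) (hz : coeff 0 z = 0)
    {n : ℕ} (hyz : ∀ k < n, coeff k y = coeff k z) {m : ℕ} (hm : 2 ≤ m)
    {j : ℕ} (hj : j ≤ n) : coeff j (y ^ m) = coeff j (z ^ m) := by
  have hgeom := geom_sum₂_mul y z m
  have hS0 : coeff 0 (∑ i ∈ Finset.range m, y ^ i * z ^ (m - 1 - i)) = 0 := by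
    rw [map_sum]
    apply Finset.sum_eq_zero
    intro i hi
    rcases Nat.eq_zero_or_pos i with h0 | h0
    · subst h0
      simp only [pow_zero, one_mul, coeff_zero_eq_constantCoeff, map_pow]
      rw [← coeff_zero_eq_constantCoeff_apply, hz, zero_pow (by omega)]
    · simp only [coeff_zero_eq_constantCoeff, map_mul, map_pow]
      rw [← coeff_zero_eq_constantCoeff_apply, hy, zero_pow (by omega), zero_mul]
  have hsub : coeff j (y ^ m) - coeff j (z ^ m) = 0 := by
    rw [← map_sub, ← hgeom, PowerSeries.coeff_mul]
    apply Finset.sum_eq_zero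
    intro ij hij
    rw [Finset.HasAntidiagonal.mem_antidiagonal] at hij
    rcases lt_or_ge ij.2 n with h | h
    · rw [map_sub, hyz _ h, sub_self, mul_zero]
    · have h1 : ij.1 = 0 := by omega
      rw [h1, hS0, zero_mul]
  exact sub_eq_zero.mp hsub

lemma rhs_coeff_congr (a b : PowerSeries K) (c : ℕ → PowerSeries K)
    (hb0 : coeff 0 b = 0) {y z : PowerSeries K}
    (hy : coeff 0 y = 0) (hz : coeff 0 z = 0) {n : ℕ}
    (hyz : ∀ k < n, coeff k y = coeff k z) :
    coeff n (a + b * y + seriesSum c y) = coeff n (a + b * z + seriesSum c z) := by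
  simp only [map_add]
  congr 1
  · congr 1
    rw [PowerSeries.coeff_mul, PowerSeries.coeff_mul]
    apply Finset.sum_congr rfl
    intro ij hij
    rw [Finset.HasAntidiagonal.mem_antidiagonal] at hij
    rcases lt_or_ge ij.2 n with h | h
    · rw [hyz _ h]
    · have h1 : ij.1 = 0 := by omega
      rw [h1, hb0, zero_mul, zero_mul]
  · simp only [seriesSum, coeff_mk]
    apply Finset.sum_congr rfl
    intro m hm
    rw [Finset.mem_Icc] at hm
    rw [PowerSeries.coeff_mul, PowerSeries.coeff_mul]
    apply Finset.sum_congr rfl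
    intro ij hij
    rw [Finset.HasAntidiagonal.mem_antidiagonal] at hij
    rw [pow_coeff_congr hy hz hyz hm.1 (show ij.2 ≤ n by omega)]

/-- The recursively-defined coefficients of the solution. -/
noncomputable def sol (α : K) (a b : PowerSeries K) (c : ℕ → PowerSeries K) (n : ℕ) : K :=
  (coeff n (a + b * (PowerSeries.mk fun k => if h : k < n then sol α a b c k else 0)
    + seriesSum c (PowerSeries.mk fun k => if h : k < n then sol α a b c k else 0)))
    / ((n : K) + α)
  termination_by n
  decreasing_by all_goals omega

end Aux

/-- **Proposition 3.1 (1).** Existence and uniqueness of the formal power series solution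
`y`, with `y(0) = y'(0) = 0`, of the differential equation
`X·y' + α·y = a + b·y + ∑_{m≥2} c_m·y^m`, where `α = s/t`. -/
theorem ode_existence_uniqueness
    (p : ℕ) (hp : p.Prime) (hodd : Odd p)
    (s t : ℕ) (hs1 : 1 ≤ s) (hs2 : s ≤ p - 1) (ht1 : 1 ≤ t) (ht2 : t ≤ p - 1)
    (hst : Nat.Coprime s t)
    (K : Type*) [NormedField K] [CompleteSpace K] [IsUltrametricDist K]
    (hnorm : ∀ n : ℕ, n ≠ 0 → ‖(n : K)‖ = (p : ℝ) ^ (-(padicValNat p n : ℤ)))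
    (r : ℝ) (hr0 : 0 < r) (hr1 : r ≤ 1)
    (a b : PowerSeries K) (c : ℕ → PowerSeries K)
    (ha : ∀ n : ℕ, ‖coeff n a‖ * r ^ n ≤ r / p)
    (hb : ∀ n : ℕ, ‖coeff n b‖ * r ^ n ≤ r / p)
    (hc : ∀ m : ℕ, 2 ≤ m → ∀ n : ℕ, ‖coeff n (c m)‖ * r ^ n ≤ 1 / p)
    (ha0 : coeff 0 a = 0) (ha1 : coeff 1 a = 0) (hb0 : coeff 0 b = 0) :
    ∃! y : PowerSeries K, coeff 0 y = 0 ∧ coeff 1 y = 0 ∧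
      X * (d⁄dX K) y + C ((s : K) / (t : K)) * y = a + b * y + seriesSum c y := by
  set α : K := (s : K) / (t : K) with hα_def
  -- nonzero natural numbers are nonzero in K
  have hnat : ∀ m : ℕ, m ≠ 0 → (m : K) ≠ 0 := by
    intro m hm h0
    have h1 := hnorm m hm
    rw [h0, norm_zero] at h1
    have h2 : (0 : ℝ) < (p : ℝ) ^ (-(padicValNat p m : ℤ)) :=
      zpow_pos (by exact_mod_cast hp.pos) _
    linarith [h1 ▸ h2]
  have htK : (t : K) ≠ 0 := hnat t (by omega)
  have hα : ∀ n : ℕ, ((n : K) + α) ≠ 0 := by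
    intro n h
    have key : ((n * t + s : ℕ) : K) = ((n : K) + α) * t := by
      rw [hα_def, add_mul, div_mul_cancel₀ _ htK]
      push_cast
      ring
    rw [h, zero_mul] at key
    exact hnat (n * t + s) (by omega) key
  -- a solution satisfies the coefficient recursion
  have key_of : ∀ y : PowerSeries K,
      X * (d⁄dX K) y + C α * y = a + b * y + seriesSum c y →
      ∀ n : ℕ, ((n : K) + α) * coeff n y = coeff n (a + b * y + seriesSum c y) := by
    intro y heq n
    have := congrArg (coeff n) heq
    rw [map_add, coeff_X_mul_dX, PowerSeries.coeff_C_mul] at this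
    rw [← this]
    ring
  -- the candidate solution
  set y : PowerSeries K := PowerSeries.mk (sol α a b c) with hy_def
  have hyk : ∀ k, coeff k y = sol α a b c k := fun k => coeff_mk k _
  have hsol0 : sol α a b c 0 = 0 := by
    rw [sol]
    have h1 : coeff 0 (b * (PowerSeries.mk fun k =>
        if h : k < 0 then sol α a b c k else 0)) = 0 := by
      rw [coeff_zero_eq_constantCoeff_apply, map_mul, ← coeff_zero_eq_constantCoeff_apply, hb0,
        zero_mul]
    have h2 : coeff 0 (seriesSum c (PowerSeries.mk fun k =>
        if h : k < 0 then sol α a b c k else 0)) = 0 := by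
      simp [seriesSum]
    rw [map_add, map_add, ha0, h1, h2]
    simp
  have hy0 : coeff 0 y = 0 := by rw [hyk, hsol0]
  -- truncations agree with y below n and have zero constant coefficient
  have htrunc0 : ∀ n : ℕ, coeff 0 (PowerSeries.mk fun k =>
      if h : k < n then sol α a b c k else 0) = 0 := by
    intro n
    rw [coeff_mk]
    split
    · exact hsol0
    · rfl
  have htrunc : ∀ n : ℕ, ∀ k < n, coeff k (PowerSeries.mk fun k =>
      if h : k < n then sol α a b c k else 0) = coeff k y := by
    intro n k hk
    rw [coeff_mk, dif_pos hk, hyk]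
  -- the key recursion for y
  have hkey : ∀ n : ℕ, ((n : K) + α) * coeff n y = coeff n (a + b * y + seriesSum c y) := by
    intro n
    rw [hyk]
    conv_lhs => rw [sol]
    rw [mul_div_cancel₀ _ (hα n)]
    exact rhs_coeff_congr a b c hb0 (htrunc0 n) hy0 (htrunc n)
  -- from the recursion, the ODE holds
  have heq : X * (d⁄dX K) y + C α * y = a + b * y + seriesSum c y := by
    ext n
    rw [map_add, coeff_X_mul_dX, PowerSeries.coeff_C_mul, ← hkey n]
    ring
  -- coefficient 1 vanishes for any solution with vanishing constant coefficient
  have hcoeff1 : ∀ z : PowerSeries K, coeff 0 z = 0 →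
      (∀ n : ℕ, ((n : K) + α) * coeff n z = coeff n (a + b * z + seriesSum c z)) →
      coeff 1 z = 0 := by
    intro z hz0 hk
    have h1 := hk 1
    have hbz : coeff 1 (b * z) = 0 := by
      rw [PowerSeries.coeff_mul]
      apply Finset.sum_eq_zero
      intro ij hij
      rw [Finset.HasAntidiagonal.mem_antidiagonal] at hij
      rcases Nat.eq_zero_or_pos ij.1 with h | h
      · rw [h, hb0, zero_mul]
      · have : ij.2 = 0 := by omega
        rw [this, hz0, mul_zero]
    have hsz : coeff 1 (seriesSum c z) = 0 := by
      simp [seriesSum]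
    rw [map_add, map_add, ha1, hbz, hsz, add_zero, add_zero] at h1
    exact (mul_eq_zero.mp h1).resolve_left (hα 1)
  have hy1 : coeff 1 y = 0 := hcoeff1 y hy0 hkey
  refine ⟨y, ⟨hy0, hy1, heq⟩, ?_⟩
  rintro z ⟨hz0, hz1, heqz⟩
  have hkz := key_of z heqz
  have hall : ∀ n, coeff n z = coeff n y := by
    intro n
    induction n using Nat.strong_induction_on with
    | _ n ih =>
      have e1 := hkz n
      have e2 := hkey n
      have e3 : coeff n (a + b * z + seriesSum c z)
          = coeff n (a + b * y + seriesSum c y) :=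
        rhs_coeff_congr a b c hb0 hz0 hy0 ih
      have : ((n : K) + α) * coeff n z = ((n : K) + α) * coeff n y := by
        rw [e1, e2, e3]
      exact mul_left_cancel₀ (hα n) this
  ext n
  exact hall n
end

section
/- Let p be an odd prime, let k be a positive integer, and let b = ∑_{m≥2^k} b_m X^m ∈ K[[X]] (i.e. the coefficient b_m vanishes for m < 2^k) be a formal power series such that ‖b‖_r ≤ r/p for some real number r with 0 < r ≤ 1. Set B := ∑_{m≥2^k} (b_m/m) X^m and r₁ := r·exp(−(2/(p(p−1)))·log p) = r·p^{−2/(p(p−1))}. Then ‖B‖_{r₁} ≤ p^{−2/(p−1)}, i.e. |b_m/m|·r₁^m ≤ p^{−2/(p−1)} for every m ≥ 2^k. -/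
open PowerSeries

private lemma aux_pow (P : ℝ) (hP : 3 ≤ P) :
    ∀ w : ℕ, (w : ℝ) * P * (P - 1) + 2 * P ≤ 2 * P ^ (w + 1) := by
  intro w
  induction w with
  | zero => norm_num
  | succ n ih =>
    have hP0 : (0:ℝ) < P := by linarith
    have h2 : ((n:ℝ) * P * (P - 1) + 2 * P) * P ≤ 2 * P ^ (n + 1) * P :=
      mul_le_mul_of_nonneg_right ih hP0.le
    have hn : (0:ℝ) ≤ (n:ℝ) := Nat.cast_nonneg n
    have : 2 * P ^ (n + 1 + 1) = 2 * P ^ (n + 1) * P := by ring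
    push_cast
    nlinarith [h2, mul_nonneg (mul_nonneg hn hP0.le) (sq_nonneg (P - 1))]

/-- **Lemma 3.5 (1).** If `b = ∑_{m ≥ 2^k} b_m X^m` satisfies `‖b‖_r ≤ r/p`
(`0 < r ≤ 1`), then `B = ∑_{m ≥ 2^k} (b_m/m) X^m` satisfies `‖B‖_{r₁} ≤ p^{-2/(p-1)}`
for `r₁ = r·exp(−(2/(p(p−1)))·log p)`, i.e. `|b_m/m|·r₁^m ≤ p^{-2/(p-1)}` for all
`m ≥ 2^k`. -/
theorem antiderivative_bound_one
    (p : ℕ) (hp : p.Prime) (hodd : Odd p) (k : ℕ) (hk : 1 ≤ k)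
    (K : Type*) [NormedField K] [CompleteSpace K] [IsUltrametricDist K]
    (hnorm : ∀ n : ℕ, n ≠ 0 → ‖(n : K)‖ = (p : ℝ) ^ (-(padicValNat p n : ℤ)))
    (r : ℝ) (hr0 : 0 < r) (hr1 : r ≤ 1)
    (b : PowerSeries K)
    (hlow : ∀ m : ℕ, m < 2 ^ k → coeff m b = 0)
    (hb : ∀ m : ℕ, ‖coeff m b‖ * r ^ m ≤ r / p) :
    ∀ m : ℕ, 2 ^ k ≤ m →
      ‖coeff m b / (m : K)‖ *
          (r * Real.exp (-(2 / ((p : ℝ) * ((p : ℝ) - 1))) * Real.log p)) ^ m ≤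
        (p : ℝ) ^ (-2 / ((p : ℝ) - 1)) := by
  intro m hm
  have hpne2 : p ≠ 2 := by rintro rfl; exact (by decide : ¬ Odd 2) hodd
  have hp3 : 3 ≤ p := by have := hp.two_le; omega
  have hm2 : 2 ≤ m := le_trans (by calc (2:ℕ) = 2 ^ 1 := rfl
    _ ≤ 2 ^ k := Nat.pow_le_pow_right (by norm_num) hk) hm
  have hm0 : m ≠ 0 := by omega
  set v := padicValNat p m with hv
  have hpow : p ^ v ≤ m := Nat.le_of_dvd (by omega) pow_padicValNat_dvd
  set P := (p : ℝ) with hP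
  have hP3 : (3:ℝ) ≤ P := by rw [hP]; exact_mod_cast hp3
  have hP0 : (0:ℝ) < P := by linarith
  have hP1 : (1:ℝ) < P := by linarith
  have hd : (0:ℝ) < P * (P - 1) := by nlinarith
  have hd1 : (0:ℝ) < P - 1 := by linarith
  have hlog : 0 < Real.log P := Real.log_pos hP1
  have hpowR : P ^ v ≤ (m : ℝ) := by rw [hP]; exact_mod_cast hpow
  have hmR : (2:ℝ) ≤ (m : ℝ) := by exact_mod_cast hm2
  -- key inequality
  have key : ((v:ℝ) - 1) * P * (P - 1) + 2 * P ≤ 2 * m := by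
    rcases Nat.eq_zero_or_pos v with h0 | h1
    · rw [h0]; push_cast; nlinarith
    · have haux := aux_pow P hP3 (v - 1)
      have hcast : ((v - 1 : ℕ) : ℝ) = (v : ℝ) - 1 := by
        have : 1 ≤ v := h1
        push_cast [this]; ring
      rw [hcast, Nat.sub_add_cancel h1] at haux
      linarith
  -- exponent inequality
  have hexp : (v:ℝ) - 1 - 2 * m / (P * (P - 1)) ≤ -2 / (P - 1) := by
    rw [← mul_le_mul_iff_of_pos_right hd]
    have e1 : ((v:ℝ) - 1 - 2 * m / (P * (P - 1))) * (P * (P - 1))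
        = ((v:ℝ) - 1) * P * (P - 1) - 2 * m := by field_simp
    have e2 : (-2 / (P - 1)) * (P * (P - 1)) = -2 * P := by field_simp
    rw [e1, e2]; linarith
  -- norm of m
  have hnm : ‖(m : K)‖ = P ^ (-(v:ℤ)) := hnorm m hm0
  have hz : P ^ (-(v:ℤ)) = (P ^ v)⁻¹ := by rw [zpow_neg, zpow_natCast]
  rw [norm_div, hnm, hz, div_eq_mul_inv, inv_inv, mul_pow]
  set E := Real.exp (-(2 / (P * (P - 1))) * Real.log P) with hE
  have hE0 : 0 < E := Real.exp_pos _
  have hr' : ‖coeff m b‖ * r ^ m ≤ 1 / P :=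
    le_trans (hb m) ((div_le_div_iff_of_pos_right hP0).mpr hr1)
  have e1 : (1:ℝ) / P = Real.exp (-Real.log P) := by
    rw [Real.exp_neg, Real.exp_log hP0, one_div]
  have e2 : Real.exp ((v:ℝ) * Real.log P) = P ^ v := by
    rw [Real.exp_nat_mul, Real.exp_log hP0]
  have e3 : E ^ m = Real.exp ((m:ℝ) * (-(2 / (P * (P - 1))) * Real.log P)) := by
    rw [Real.exp_nat_mul]
  calc ‖coeff m b‖ * P ^ v * (r ^ m * E ^ m)
      = (‖coeff m b‖ * r ^ m) * (P ^ v * E ^ m) := by ring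
    _ ≤ (1 / P) * (P ^ v * E ^ m) := by
        apply mul_le_mul_of_nonneg_right hr'
        positivity
    _ = Real.exp (-Real.log P + ((v:ℝ) * Real.log P
          + (m:ℝ) * (-(2 / (P * (P - 1))) * Real.log P))) := by
        rw [Real.exp_add, Real.exp_add, e2, ← e3, ← e1]
    _ ≤ Real.exp (Real.log P * (-2 / (P - 1))) := by
        apply Real.exp_le_exp.mpr
        have h2 := mul_le_mul_of_nonneg_right hexp hlog.le
        ring_nf at h2 ⊢
        linarith
    _ = P ^ (-2 / (P - 1)) := (Real.rpow_def_of_pos hP0 _).symm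
end

section
/- Let p be an odd prime, let k be a positive integer, and let b = ∑_{m≥2^k} b_m X^m ∈ K[[X]] (i.e. the coefficient b_m vanishes for m < 2^k) be a formal power series such that ‖b‖_r ≤ r/p for some real number r with 0 < r ≤ 1. Set B := ∑_{m≥2^k} (b_m/m) X^m and r₂ := r·exp(−((k+1)/2^k)·log 2) = r·2^{−(k+1)/2^k}. Then ‖B‖_{r₂} ≤ p^{−2/(p−1)}, i.e. |b_m/m|·r₂^m ≤ p^{−2/(p−1)} for every m ≥ 2^k. -/
open PowerSeries

lemma aux_exp_bound (k m : ℕ) (hk : 1 ≤ k) (hm : 2 ^ k ≤ m) :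
    (m : ℝ) * Real.exp (-(((k : ℝ) + 1) / 2 ^ k) * Real.log 2) ^ m ≤ 1 / 2 := by
  have h2k : (0 : ℝ) < 2 ^ k := by positivity
  set t : ℝ := (m : ℝ) / 2 ^ k with ht
  have ht1 : 1 ≤ t := (one_le_div h2k).mpr (by exact_mod_cast hm)
  have hmt : (m : ℝ) = t * 2 ^ k := by rw [ht, div_mul_cancel₀ _ h2k.ne']
  set a : ℝ := 2 ^ (k + 1) with ha
  have ha4 : (4 : ℝ) ≤ a := by
    calc (4:ℝ) = 2 ^ 2 := by norm_num
    _ ≤ 2 ^ (k+1) := by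
        apply pow_le_pow_right₀ (by norm_num)
        omega
  have hapos : (0 : ℝ) < a := by positivity
  have hloga : 1 ≤ Real.log a := by
    rw [Real.le_log_iff_exp_le hapos]
    calc Real.exp 1 ≤ 2.7182818286 := (Real.exp_one_lt_d9).le
    _ ≤ a := by linarith
  -- exp part equals a ^ (-t) as rpow
  have hexp : Real.exp (-(((k : ℝ) + 1) / 2 ^ k) * Real.log 2) ^ m
      = Real.exp (-(t * Real.log a)) := by
    rw [← Real.exp_nat_mul]
    congr 1
    have : Real.log a = ((k : ℝ) + 1) * Real.log 2 := by
      rw [ha, Real.log_pow]; push_cast; ring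
    rw [this, hmt]
    field_simp
  rw [hexp]
  -- goal : t * 2^k * exp (-(t * log a)) ≤ 1/2
  have key : a * t ≤ a ^ t := by
    have h1 : a ^ t = a * a ^ (t - 1) := by
      have : a ^ t = a ^ ((1:ℝ) + (t - 1)) := by ring_nf
      rw [this, Real.rpow_add hapos, Real.rpow_one]
    have h2 : t ≤ a ^ (t - 1) := by
      rw [Real.rpow_def_of_pos hapos]
      calc t = 1 + (t - 1) * 1 := by ring
      _ ≤ 1 + (t - 1) * Real.log a := by nlinarith
      _ = (Real.log a * (t - 1)) + 1 := by ring
      _ ≤ Real.exp (Real.log a * (t - 1)) := Real.add_one_le_exp _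
    calc a * t ≤ a * a ^ (t - 1) := by nlinarith
    _ = a ^ t := h1.symm
  have hat : a ^ t = Real.exp (t * Real.log a) := by
    rw [Real.rpow_def_of_pos hapos]; ring_nf
  have hexppos : 0 < Real.exp (t * Real.log a) := Real.exp_pos _
  rw [hmt, Real.exp_neg]
  rw [hat] at key
  have h2m : t * 2 ^ k * 2 ≤ Real.exp (t * Real.log a) := by
    calc t * 2 ^ k * 2 = a * t := by rw [ha]; ring
    _ ≤ _ := key
  rw [le_div_iff₀ (by norm_num : (0:ℝ) < 2)]
  calc t * (2:ℝ) ^ k * (Real.exp (t * Real.log a))⁻¹ * 2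
      = (t * 2 ^ k * 2) * (Real.exp (t * Real.log a))⁻¹ := by ring
  _ ≤ Real.exp (t * Real.log a) * (Real.exp (t * Real.log a))⁻¹ := by
      apply mul_le_mul_of_nonneg_right h2m (by positivity)
  _ = 1 := mul_inv_cancel₀ hexppos.ne'

/-- **Lemma 3.5 (2).** If `b = ∑_{m ≥ 2^k} b_m X^m` satisfies `‖b‖_r ≤ r/p`
(`0 < r ≤ 1`), then `B = ∑_{m ≥ 2^k} (b_m/m) X^m` satisfies `‖B‖_{r₂} ≤ p^{-2/(p-1)}`
for `r₂ = r·exp(−((k+1)/2^k)·log 2)`, i.e. `|b_m/m|·r₂^m ≤ p^{-2/(p-1)}` for all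
`m ≥ 2^k`. -/
theorem antiderivative_bound_two
    (p : ℕ) (hp : p.Prime) (hodd : Odd p) (k : ℕ) (hk : 1 ≤ k)
    (K : Type*) [NormedField K] [CompleteSpace K] [IsUltrametricDist K]
    (hnorm : ∀ n : ℕ, n ≠ 0 → ‖(n : K)‖ = (p : ℝ) ^ (-(padicValNat p n : ℤ)))
    (r : ℝ) (hr0 : 0 < r) (hr1 : r ≤ 1)
    (b : PowerSeries K)
    (hlow : ∀ m : ℕ, m < 2 ^ k → coeff m b = 0)
    (hb : ∀ m : ℕ, ‖coeff m b‖ * r ^ m ≤ r / p) :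
    ∀ m : ℕ, 2 ^ k ≤ m →
      ‖coeff m b / (m : K)‖ *
          (r * Real.exp (-(((k : ℝ) + 1) / 2 ^ k) * Real.log 2)) ^ m ≤
        (p : ℝ) ^ (-2 / ((p : ℝ) - 1)) := by
  intro m hm
  have hm0 : m ≠ 0 := by have := Nat.one_le_two_pow (n := k); omega
  have hppos : (0:ℝ) < p := by exact_mod_cast hp.pos
  have hp3 : 3 ≤ p := by
    obtain ⟨j, hj⟩ := hodd
    have := hp.two_le
    omega
  set v := padicValNat p m with hv
  have hpv : (p:ℝ) ^ v ≤ m := by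
    have hd : p ^ v ∣ m := pow_padicValNat_dvd
    exact_mod_cast Nat.le_of_dvd (Nat.pos_of_ne_zero hm0) hd
  have hnm : ‖(m:K)‖ = ((p:ℝ) ^ v)⁻¹ := by
    rw [hnorm m hm0, zpow_neg, zpow_natCast]
  set E := Real.exp (-(((k : ℝ) + 1) / 2 ^ k) * Real.log 2) with hE
  have hEpos : 0 < E := Real.exp_pos _
  have hdiv : ‖coeff m b / (m : K)‖ = ‖coeff m b‖ * (p:ℝ) ^ v := by
    rw [norm_div, hnm, div_eq_mul_inv, inv_inv]
  have hbm : ‖coeff m b‖ * r ^ m ≤ r / p := hb m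
  have hnonneg : (0:ℝ) ≤ ‖coeff m b‖ := norm_nonneg _
  have hkey : (m : ℝ) * E ^ m ≤ 1 / 2 := aux_exp_bound k m hk hm
  have step1 : ‖coeff m b / (m : K)‖ * (r * E) ^ m
      = (‖coeff m b‖ * r ^ m) * ((p:ℝ) ^ v * E ^ m) := by
    rw [hdiv, mul_pow]; ring
  have step2 : (‖coeff m b‖ * r ^ m) * ((p:ℝ) ^ v * E ^ m)
      ≤ (r / p) * ((p:ℝ) ^ v * E ^ m) := by
    apply mul_le_mul_of_nonneg_right hbm (by positivity)
  have step3 : (r / p) * ((p:ℝ) ^ v * E ^ m) ≤ (1 / p) * ((m:ℝ) * E ^ m) := by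
    apply mul_le_mul
    · gcongr
    · exact mul_le_mul_of_nonneg_right hpv (by positivity)
    · positivity
    · positivity
  have step4 : (1 / p) * ((m:ℝ) * E ^ m) ≤ (1 / p) * (1 / 2) :=
    mul_le_mul_of_nonneg_left hkey (by positivity)
  have step5 : (1 / (p:ℝ)) * (1 / 2) ≤ (p:ℝ) ^ (-2 / ((p:ℝ) - 1)) := by
    have h1 : (1 / (p:ℝ)) * (1 / 2) ≤ 1 / p := by
      rw [mul_one_div]
      exact half_le_self (by positivity)
    refine h1.trans ?_
    have h2 : (1 : ℝ) / p = (p:ℝ) ^ (-1 : ℝ) := by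
      rw [Real.rpow_neg_one, one_div]
    rw [h2]
    apply Real.rpow_le_rpow_of_exponent_le (by exact_mod_cast hp.one_le)
    have hps : (2:ℝ) ≤ (p:ℝ) - 1 := by
      have : (3:ℝ) ≤ p := by exact_mod_cast hp3
      linarith
    rw [neg_div, neg_le_neg_iff, div_le_one (by linarith)]
    linarith
  calc ‖coeff m b / (m : K)‖ * (r * E) ^ m
      = (‖coeff m b‖ * r ^ m) * ((p:ℝ) ^ v * E ^ m) := step1
  _ ≤ (r / p) * ((p:ℝ) ^ v * E ^ m) := step2
  _ ≤ (1 / p) * ((m:ℝ) * E ^ m) := step3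
  _ ≤ (1 / p) * (1 / 2) := step4
  _ ≤ (p : ℝ) ^ (-2 / ((p : ℝ) - 1)) := step5
end

section
/- Let p be an odd prime, let k be a positive integer, and let a = ∑_{m≥2^k} a_m X^m ∈ K[[X]] (i.e. the coefficient a_m vanishes for m < 2^k) be a formal power series such that ‖a‖_r ≤ r/p for some positive real number r. Let 1 ≤ s ≤ p−1 and 1 ≤ t ≤ p−1 be relatively prime integers, set α := s/t and A := ∑_{m≥2^k} (a_m/(m+α)) X^m. Set r₁ := r·exp(−(t/(p−1)²)·log p) = r·p^{−t/(p−1)²}. Then ‖A‖_{r₁} ≤ r₁, i.e. |a_m/(m+α)|·r₁^m ≤ r₁ for every m ≥ 2^k. -/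
open PowerSeries

lemma aux_pow_s4 (q v : ℕ) : (v+1)*(q+2)^2 + 2*(q+2) ≤ (q+3)^(v+2) := by
  induction v with
  | zero => ring_nf; nlinarith [sq_nonneg q]
  | succ w ih =>
      have h1 : (q+2)^2 ≤ (q+3)^(w+2) := by
        calc (q+2)^2 ≤ (q+3)^2 := by nlinarith
        _ ≤ (q+3)^(w+2) := Nat.pow_le_pow_right (by omega) (by omega)
      have : (q+3)^(w+3) = (q+3)^(w+2) + (q+2)*(q+3)^(w+2) := by ring
      nlinarith [ih]

lemma val_bound (p s t m : ℕ) (hp : p.Prime) (hp3 : 3 ≤ p)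
    (hs1 : 1 ≤ s) (hs2 : s ≤ p - 1) (ht1 : 1 ≤ t) (ht2 : t ≤ p - 1) (hm : 2 ≤ m) :
    padicValNat p (m*t+s) * (p-1)^2 ≤ (p-1)^2 + t*(m-1) := by
  obtain ⟨Q, rfl⟩ : ∃ Q, p = Q + 3 := ⟨p - 3, by omega⟩
  obtain ⟨m', rfl⟩ : ∃ m', m = m' + 2 := ⟨m - 2, by omega⟩
  obtain ⟨u, hu⟩ : ∃ u, padicValNat (Q+3) ((m'+2)*t+s) = u := ⟨_, rfl⟩
  rw [hu]
  have hpos : 0 < (m'+2)*t+s := by positivity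
  have hle : (Q+3)^u ≤ (m'+2)*t+s := hu ▸ Nat.le_of_dvd hpos pow_padicValNat_dvd
  rcases Nat.lt_or_ge u 2 with h | h
  · have : Q + 3 - 1 = Q + 2 := by omega
    rw [this]
    have : t*(m'+2-1) = t*(m'+1) := by norm_num
    rw [this]
    nlinarith
  · obtain ⟨w, rfl⟩ : ∃ w, u = w + 2 := ⟨u - 2, by omega⟩
    have haux := aux_pow_s4 Q w
    have h1 : Q + 3 - 1 = Q + 2 := by omega
    have h2 : m' + 2 - 1 = m' + 1 := by omega
    rw [h1, h2]
    have hs2' : s ≤ Q + 2 := by omega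
    have ht2' : t ≤ Q + 2 := by omega
    nlinarith

/-- **Lemma 3.7 (1).** If `a = ∑_{m ≥ 2^k} a_m X^m` satisfies `‖a‖_r ≤ r/p` (`r > 0`),
and `α = s/t` with `1 ≤ s, t ≤ p−1` coprime, then `A = ∑_{m ≥ 2^k} (a_m/(m+α)) X^m`
satisfies `‖A‖_{r₁} ≤ r₁` for `r₁ = r·exp(−(t/(p−1)²)·log p)`, i.e.
`|a_m/(m+α)|·r₁^m ≤ r₁` for all `m ≥ 2^k`. -/
theorem resonance_bound_one
    (p : ℕ) (hp : p.Prime) (hodd : Odd p) (k : ℕ) (hk : 1 ≤ k)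
    (s t : ℕ) (hs1 : 1 ≤ s) (hs2 : s ≤ p - 1) (ht1 : 1 ≤ t) (ht2 : t ≤ p - 1)
    (hst : Nat.Coprime s t)
    (K : Type*) [NormedField K] [CompleteSpace K] [IsUltrametricDist K]
    (hnorm : ∀ n : ℕ, n ≠ 0 → ‖(n : K)‖ = (p : ℝ) ^ (-(padicValNat p n : ℤ)))
    (r : ℝ) (hr0 : 0 < r)
    (a : PowerSeries K)
    (hlow : ∀ m : ℕ, m < 2 ^ k → coeff m a = 0)
    (ha : ∀ m : ℕ, ‖coeff m a‖ * r ^ m ≤ r / p) :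
    ∀ m : ℕ, 2 ^ k ≤ m →
      ‖coeff m a / ((m : K) + (s : K) / (t : K))‖ *
          (r * Real.exp (-((t : ℝ) / ((p : ℝ) - 1) ^ 2) * Real.log p)) ^ m ≤
        r * Real.exp (-((t : ℝ) / ((p : ℝ) - 1) ^ 2) * Real.log p) := by
  intro m hm
  have hp3 : 3 ≤ p := by
    obtain ⟨n, hn⟩ := hodd
    have := hp.two_le
    omega
  have hq1 : (1:ℝ) < (p:ℝ) := by exact_mod_cast hp.one_lt
  have hq0 : (0:ℝ) < (p:ℝ) := by linarith
  have hm2 : 2 ≤ m := le_trans (by calc 2 = 2^1 := (pow_one 2).symm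
                                    _ ≤ 2^k := Nat.pow_le_pow_right (by norm_num) hk) hm
  -- t and m*t+s are nonzero naturals not... values
  have htp : t < p := by omega
  have htne : t ≠ 0 := by omega
  have hcne : m*t+s ≠ 0 := by positivity
  have hvalt : padicValNat p t = 0 :=
    padicValNat.eq_zero_of_not_dvd (fun hdvd => by have := Nat.le_of_dvd (by omega) hdvd; omega)
  have htKn : ‖((t:ℕ):K)‖ = 1 := by
    rw [hnorm t htne, hvalt]; norm_num
  have htK : ((t:ℕ):K) ≠ 0 := by
    intro h0; rw [h0, norm_zero] at htKn; norm_num at htKn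
  -- rewrite the denominator as (m*t+s)/t
  have hsum : (m : K) + (s : K) / (t : K) = ((m*t+s : ℕ):K) / ((t:ℕ):K) := by
    push_cast
    field_simp
  obtain ⟨u, hu⟩ : ∃ u, padicValNat p (m*t+s) = u := ⟨_, rfl⟩
  have hnormden : ‖(m : K) + (s : K) / (t : K)‖ = (((p:ℝ)) ^ u)⁻¹ := by
    rw [hsum, norm_div, hnorm _ hcne, htKn, div_one, hu, zpow_neg, zpow_natCast]
  rw [norm_div, hnormden, div_eq_mul_inv, inv_inv]
  set c₀ : ℝ := (t : ℝ) / ((p : ℝ) - 1) ^ 2 with hc₀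
  have hd : (0:ℝ) < ((p:ℝ) - 1)^2 := by nlinarith
  have hc₀0 : 0 ≤ c₀ := by positivity
  have hE : Real.exp (-c₀ * Real.log p) = (p:ℝ) ^ (-c₀ : ℝ) := by
    rw [Real.rpow_def_of_pos hq0, mul_comm]
  rw [hE, mul_pow]
  have hXm : ((p:ℝ) ^ (-c₀ : ℝ))^m = (p:ℝ) ^ (-c₀ * (m:ℝ)) := by
    rw [← Real.rpow_natCast ((p:ℝ) ^ (-c₀ : ℝ)) m, ← Real.rpow_mul hq0.le]
  rw [hXm]
  -- key exponent inequality
  have hval := val_bound p s t m hp hp3 hs1 hs2 ht1 ht2 hm2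
  rw [hu] at hval
  have hcast : (u:ℝ) * ((p:ℝ) - 1)^2 ≤ ((p:ℝ) - 1)^2 + (t:ℝ) * ((m:ℝ) - 1) := by
    have h1 : ((p - 1 : ℕ) : ℝ) = (p:ℝ) - 1 := by
      have : 1 ≤ p := hp.one_le
      push_cast [this]; ring
    have h2 : ((m - 1 : ℕ) : ℝ) = (m:ℝ) - 1 := by
      have : 1 ≤ m := by omega
      push_cast [this]; ring
    calc (u:ℝ) * ((p:ℝ) - 1)^2 = ((u * (p-1)^2 : ℕ) : ℝ) := by push_cast [h1]; ring
    _ ≤ (((p-1)^2 + t*(m-1) : ℕ) : ℝ) := by exact_mod_cast hval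
    _ = ((p:ℝ) - 1)^2 + (t:ℝ) * ((m:ℝ) - 1) := by push_cast [h1, h2]; ring
  have hc₀t : c₀ * ((p:ℝ) - 1)^2 = (t:ℝ) := div_mul_cancel₀ _ (ne_of_gt hd)
  have hexp : (u:ℝ) + (-c₀ * (m:ℝ)) ≤ 1 + -c₀ := by nlinarith
  have hkey : (p:ℝ) ^ u * (p:ℝ) ^ (-c₀ * (m:ℝ)) ≤ (p:ℝ) ^ (1 + -c₀ : ℝ) := by
    rw [← Real.rpow_natCast (p:ℝ) u, ← Real.rpow_add hq0]
    exact Real.rpow_le_rpow_left_iff hq1 |>.mpr hexp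
  have hrhs : r / (p:ℝ) * ((p:ℝ) ^ (1 + -c₀ : ℝ)) = r * (p:ℝ) ^ (-c₀ : ℝ) := by
    rw [Real.rpow_add hq0, Real.rpow_one]
    field_simp
  calc ‖(coeff m) a‖ * ((p:ℝ)^u) * (r ^ m * (p:ℝ) ^ (-c₀ * (m:ℝ)))
      = (‖(coeff m) a‖ * r ^ m) * ((p:ℝ)^u * (p:ℝ) ^ (-c₀ * (m:ℝ))) := by ring
    _ ≤ (r / (p:ℝ)) * ((p:ℝ) ^ (1 + -c₀ : ℝ)) := by
        apply mul_le_mul (ha m) hkey (by positivity) (by positivity)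
    _ = r * (p:ℝ) ^ (-c₀ : ℝ) := hrhs
end

section
/- Let p be an odd prime, let k be a positive integer, and let a = ∑_{m≥2^k} a_m X^m ∈ K[[X]] (i.e. the coefficient a_m vanishes for m < 2^k) be a formal power series such that ‖a‖_r ≤ r/p for some positive real number r. Let 1 ≤ s ≤ p−1 and 1 ≤ t ≤ p−1 be relatively prime integers, set α := s/t and A := ∑_{m≥2^k} (a_m/(m+α)) X^m. Suppose in addition that 2^k ≥ α + 2 (equivalently t·2^k ≥ s + 2t), and set r₂ := r·exp(−(k·t/2^{k−1})·log 2) = r·2^{−kt/2^{k−1}}. Then ‖A‖_{r₂} ≤ r₂, i.e. |a_m/(m+α)|·r₂^m ≤ r₂ for every m ≥ 2^k. -/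
open PowerSeries

lemma logR (k : ℕ) (hk : 1 ≤ k) (x : ℝ) (hx : (2:ℝ)^k - 1 ≤ x) :
    Real.log x ≤ Real.log (3/2) + (k * Real.log 2 / 2^(k-1)) * x := by
  have hl2 : (0.6931471803 : ℝ) < Real.log 2 := Real.log_two_gt_d9
  have h32 : (0:ℝ) ≤ Real.log (3/2) := Real.log_nonneg (by norm_num)
  have hx1 : (1:ℝ) ≤ x := by
    have h21 : (2:ℝ) ≤ 2^k := by
      calc (2:ℝ) = 2^1 := (pow_one 2).symm
      _ ≤ 2^k := pow_le_pow_right₀ (by norm_num) hk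
    linarith
  have hxpos : (0:ℝ) < x := by linarith
  rcases eq_or_lt_of_le hk with h1 | h2
  · -- k = 1
    have hk1 : k = 1 := h1.symm
    subst hk1
    simp only [Nat.cast_one, one_mul, pow_zero, div_one, Nat.sub_self]
    -- goal: log x ≤ log (3/2) + log 2 * x
    have hlpos : (0:ℝ) < Real.log 2 := by linarith
    have key := Real.log_le_sub_one_of_pos (show (0:ℝ) < Real.log 2 * x by positivity)
    rw [Real.log_mul (ne_of_gt hlpos) (ne_of_gt hxpos)] at key
    -- key : log (log 2) + log x ≤ log 2 * x - 1
    have key2 := Real.log_le_sub_one_of_pos (show (0:ℝ) < 1 / Real.log 2 by positivity)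
    rw [Real.log_div one_ne_zero (ne_of_gt hlpos), Real.log_one] at key2
    -- key2 : -log(log 2) ≤ 1/log2 - 1
    have hinv : 1 / Real.log 2 < 2 := by
      rw [div_lt_iff₀ hlpos]; linarith
    linarith
  · -- 2 ≤ k
    have hk2 : (2:ℝ) ≤ (k:ℝ) := by exact_mod_cast h2
    have hk1 : k - 1 + 1 = k := by omega
    have hpow : (2:ℝ)^k = 2 * 2^(k-1) := by
      conv_lhs => rw [← hk1]
      rw [pow_succ]; ring
    have hhalf : (1:ℝ) ≤ (2:ℝ)^(k-1) := one_le_pow₀ (by norm_num)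
    have hhpos : (0:ℝ) < (2:ℝ)^(k-1) := by linarith
    obtain ⟨x₀, hx₀def⟩ : ∃ y : ℝ, y = 2^k - 1 := ⟨_, rfl⟩
    rw [← hx₀def] at hx
    have hx₀ : (2:ℝ)^(k-1) ≤ x₀ := by rw [hx₀def, hpow]; linarith
    have hx₀pos : 0 < x₀ := by linarith
    obtain ⟨c, hcdef⟩ : ∃ y : ℝ, y = (k:ℝ) * Real.log 2 / 2^(k-1) := ⟨_, rfl⟩
    rw [show (k:ℝ) * Real.log 2 / 2^(k-1) = c from hcdef.symm]
    have hcpos : 0 < c := by rw [hcdef]; positivity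
    have hlog1 : Real.log x - Real.log x₀ ≤ x / x₀ - 1 := by
      have h := Real.log_le_sub_one_of_pos (show 0 < x/x₀ by positivity)
      rwa [Real.log_div (ne_of_gt hxpos) (ne_of_gt hx₀pos)] at h
    have hcx0 : (k:ℝ) * Real.log 2 ≤ c * x₀ := by
      have h' : (1:ℝ) ≤ x₀ / 2^(k-1) := (one_le_div hhpos).mpr hx₀
      have : c * x₀ = (k * Real.log 2) * (x₀ / 2^(k-1)) := by
        rw [hcdef]; ring
      rw [this]
      have hkl : (0:ℝ) ≤ (k:ℝ) * Real.log 2 := by nlinarith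
      nlinarith
    have hklog : (1:ℝ) ≤ (k:ℝ) * Real.log 2 := by nlinarith
    have h1c : (1:ℝ) ≤ c * x₀ := le_trans hklog hcx0
    have hslope : x / x₀ - 1 ≤ c * (x - x₀) := by
      rw [div_sub_one (ne_of_gt hx₀pos), div_le_iff₀ hx₀pos]
      nlinarith [mul_nonneg (sub_nonneg.mpr hx) (sub_nonneg.mpr h1c)]
    have hlogx₀ : Real.log x₀ ≤ (k:ℝ) * Real.log 2 := by
      calc Real.log x₀ ≤ Real.log (2^k) := by
            exact Real.log_le_log hx₀pos (by rw [hx₀def]; linarith)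
      _ = (k:ℝ) * Real.log 2 := by rw [Real.log_pow]
    linarith


set_option maxHeartbeats 1000000 in
/-- **Lemma 3.7 (2).** If `a = ∑_{m ≥ 2^k} a_m X^m` satisfies `‖a‖_r ≤ r/p` (`r > 0`),
`α = s/t` with `1 ≤ s, t ≤ p−1` coprime, and moreover `2^k ≥ α + 2` (equivalently
`t·2^k ≥ s + 2t`), then `A = ∑_{m ≥ 2^k} (a_m/(m+α)) X^m` satisfies `‖A‖_{r₂} ≤ r₂`
for `r₂ = r·exp(−(k·t/2^{k−1})·log 2)`, i.e. `|a_m/(m+α)|·r₂^m ≤ r₂` for all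
`m ≥ 2^k`. -/
theorem resonance_bound_two
    (p : ℕ) (hp : p.Prime) (hodd : Odd p) (k : ℕ) (hk : 1 ≤ k)
    (s t : ℕ) (hs1 : 1 ≤ s) (hs2 : s ≤ p - 1) (ht1 : 1 ≤ t) (ht2 : t ≤ p - 1)
    (hst : Nat.Coprime s t)
    (h2k : s + 2 * t ≤ t * 2 ^ k)
    (K : Type*) [NormedField K] [CompleteSpace K] [IsUltrametricDist K]
    (hnorm : ∀ n : ℕ, n ≠ 0 → ‖(n : K)‖ = (p : ℝ) ^ (-(padicValNat p n : ℤ)))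
    (r : ℝ) (hr0 : 0 < r)
    (a : PowerSeries K)
    (hlow : ∀ m : ℕ, m < 2 ^ k → coeff m a = 0)
    (ha : ∀ m : ℕ, ‖coeff m a‖ * r ^ m ≤ r / p) :
    ∀ m : ℕ, 2 ^ k ≤ m →
      ‖coeff m a / ((m : K) + (s : K) / (t : K))‖ *
          (r * Real.exp (-((k : ℝ) * (t : ℝ) / 2 ^ (k - 1)) * Real.log 2)) ^ m ≤
        r * Real.exp (-((k : ℝ) * (t : ℝ) / 2 ^ (k - 1)) * Real.log 2) := by
  intro m hm
  have hp3 : 3 ≤ p := by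
    have h2 := hp.two_le
    have ho := Nat.odd_iff.mp hodd
    omega
  have hppos : (0:ℝ) < p := by positivity
  have hp1 : (1:ℝ) < p := by exact_mod_cast hp.one_lt
  have hp0 : (p:ℝ) ≠ 0 := ne_of_gt hppos
  have hl2 : (0:ℝ) < Real.log 2 := Real.log_pos (by norm_num)
  have hlp3 : Real.log 3 ≤ Real.log p := Real.log_le_log (by norm_num) (by exact_mod_cast hp3)
  have hlppos : 0 < Real.log p := Real.log_pos hp1
  -- m ≥ 2 and basic casts
  have h2k2 : 2 ≤ 2^k := by
    calc 2 = 2^1 := (pow_one 2).symm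
    _ ≤ 2^k := Nat.pow_le_pow_right (by omega) hk
  have h2m : 2 ≤ m := le_trans h2k2 hm
  have hmR : (2:ℝ)^k ≤ (m:ℝ) := by exact_mod_cast hm
  have h2kR : (2:ℝ) ≤ 2^k := by
    calc (2:ℝ) = 2^1 := (pow_one 2).symm
    _ ≤ 2^k := pow_le_pow_right₀ (by norm_num) hk
  have htR : (1:ℝ) ≤ (t:ℝ) := by exact_mod_cast ht1
  -- norm of t is 1
  have htp : ¬ (p ∣ t) := fun h => by have := Nat.le_of_dvd (by omega) h; omega
  have htv : padicValNat p t = 0 := padicValNat.eq_zero_of_not_dvd htp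
  have htK : ‖(t:K)‖ = 1 := by rw [hnorm t (by omega), htv]; simp
  have htK0 : (t:K) ≠ 0 := by
    intro h; rw [h] at htK; simp at htK
  -- the denominator
  obtain ⟨N, hNdef⟩ : ∃ n : ℕ, n = m * t + s := ⟨_, rfl⟩
  have hN0 : N ≠ 0 := by rw [hNdef]; exact (Nat.add_pos_right _ hs1).ne'
  obtain ⟨v, hvdef⟩ : ∃ n : ℕ, n = padicValNat p N := ⟨_, rfl⟩
  have hden : ((m:K) + (s:K)/(t:K)) = (N : K) / (t : K) := by
    rw [hNdef]
    push_cast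
    field_simp
  have hdnorm : ‖(m:K) + (s:K)/(t:K)‖ = (p:ℝ)^(-(v:ℤ)) := by
    rw [hden, norm_div, htK, hnorm N hN0, div_one, hvdef]
  -- abbreviations
  obtain ⟨c, hcdef⟩ : ∃ y : ℝ, y = (k:ℝ) * (t:ℝ) / 2^(k-1) := ⟨_, rfl⟩
  rw [show ((k:ℝ) * (t:ℝ) / 2^(k-1) : ℝ) = c from hcdef.symm]
  set E : ℝ := Real.exp (-c * Real.log 2) with hEdef
  have hEpos : 0 < E := Real.exp_pos _
  have hcpos : 0 < c := by rw [hcdef]; positivity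
  -- the key exponent inequality
  have hKI : ((v:ℝ) - 1) * Real.log p ≤ c * Real.log 2 * ((m:ℝ) - 1) := by
    have hrhs0 : 0 ≤ c * Real.log 2 * ((m:ℝ) - 1) := by
      apply mul_nonneg (mul_nonneg hcpos.le hl2.le); linarith
    rcases Nat.eq_zero_or_pos v with hv0 | hv1
    · rw [hv0]; push_cast; nlinarith
    · -- p^v ≤ N
      have hpvN : ((p:ℝ))^v ≤ (N:ℝ) := by
        exact_mod_cast Nat.le_of_dvd (Nat.pos_of_ne_zero hN0) (hvdef ▸ pow_padicValNat_dvd)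
      have hNpos : (0:ℝ) < (N:ℝ) := by positivity
      have hvlog : (v:ℝ) * Real.log p ≤ Real.log N := by
        rw [← Real.log_pow]
        exact Real.log_le_log (by positivity) hpvN
      -- N ≤ 2 * (t * (m-1))
      have hNle : (N:ℝ) ≤ 2 * ((t:ℝ) * ((m:ℝ) - 1)) := by
        have h1 : (s:ℝ) + 2*(t:ℝ) ≤ (t:ℝ) * 2^k := by exact_mod_cast h2k
        have hNR : (N:ℝ) = (m:ℝ)*(t:ℝ) + (s:ℝ) := by rw [hNdef]; push_cast; ring
        nlinarith
      have hxlb : (2:ℝ)^k - 1 ≤ (t:ℝ) * ((m:ℝ) - 1) := by nlinarith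
      have hxpos : (0:ℝ) < (t:ℝ) * ((m:ℝ) - 1) := by nlinarith
      have hR := logR k hk ((t:ℝ) * ((m:ℝ) - 1)) hxlb
      have hlogN : Real.log N ≤ Real.log 2 + Real.log ((t:ℝ) * ((m:ℝ) - 1)) := by
        calc Real.log N ≤ Real.log (2 * ((t:ℝ) * ((m:ℝ) - 1))) :=
              Real.log_le_log hNpos hNle
        _ = Real.log 2 + Real.log ((t:ℝ) * ((m:ℝ) - 1)) :=
              Real.log_mul (by norm_num) (ne_of_gt hxpos)
      have hl32 : Real.log (3/2) = Real.log 3 - Real.log 2 :=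
        Real.log_div (by norm_num) (by norm_num)
      have heq : (k:ℝ) * Real.log 2 / 2^(k-1) * ((t:ℝ)*((m:ℝ)-1))
          = c * Real.log 2 * ((m:ℝ) - 1) := by rw [hcdef]; ring
      have hv1R : (1:ℝ) ≤ (v:ℝ) := by exact_mod_cast hv1
      nlinarith [hvlog, hlogN, hR, heq, hl32, hlp3, hlppos]
  -- the multiplicative form
  have hmain : ((p:ℝ))^v * E^m ≤ (p:ℝ) * E := by
    have e1 : ((p:ℝ))^v = Real.exp ((v:ℝ) * Real.log p) := by
      rw [Real.exp_nat_mul, Real.exp_log hppos]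
    have e2 : E^m = Real.exp ((m:ℝ) * (-c * Real.log 2)) := by
      rw [hEdef, Real.exp_nat_mul]
    have e3 : (p:ℝ) * E = Real.exp (Real.log p + (-c * Real.log 2)) := by
      rw [Real.exp_add, Real.exp_log hppos, hEdef]
    rw [e1, e2, e3, ← Real.exp_add, Real.exp_le_exp]
    nlinarith [hKI]
  -- assemble
  rw [norm_div, hdnorm, show ((p:ℝ))^(-(v:ℤ)) = (((p:ℝ))^v)⁻¹ by rw [zpow_neg, zpow_natCast],
    div_eq_mul_inv, inv_inv, mul_pow]
  calc ‖PowerSeries.coeff m a‖ * (p:ℝ)^v * (r^m * E^m)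
      = (‖PowerSeries.coeff m a‖ * r^m) * ((p:ℝ)^v * E^m) := by ring
    _ ≤ (r/p) * ((p:ℝ) * E) := by
        apply mul_le_mul (ha m) hmain (by positivity)
        exact div_nonneg hr0.le hppos.le
    _ = r * E := by field_simp
end

section
/- Let K be a field of characteristic zero, let f₁, f₂ ∈ K[[X₁,X₂]] be formal power series vanishing to order at least 2 at the origin (all coefficients in total degree ≤ 1 vanish), and let λ ∈ K be such that λ ≠ m in K for every integer m ≥ 2 (this holds in particular when λ is a negative rational number). Then there exists a unique formal power series φ ∈ K[[T]] with φ(0) = φ′(0) = 0 satisfying λ·φ(T) + f₂(T, φ(T)) − φ′(T)·(T + f₁(T, φ(T))) = 0 in K[[T]]. -/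
open PowerSeries

/-- Formal substitution of `(g, h)` into a two-variable formal power series `f`, i.e.
`f(g(T), h(T))`, well defined coefficientwise when `g` and `h` have vanishing constant
coefficients: the monomial `X₁^i X₂^j` contributes `g^i·h^j`, of order `≥ i + j`, so the
coefficient of `T^n` only receives contributions from `i, j ≤ n`. -/
noncomputable def mvSubst {K : Type*} [Field K]
    (f : MvPowerSeries (Fin 2) K) (g h : PowerSeries K) : PowerSeries K :=
  PowerSeries.mk fun n =>
    ∑ i ∈ Finset.range (n + 1), ∑ j ∈ Finset.range (n + 1),
      MvPowerSeries.coeff (Finsupp.single 0 i + Finsupp.single 1 j) f *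
        PowerSeries.coeff n (g ^ i * h ^ j)

namespace SepAux

variable {K : Type*} [Field K]

lemma coeff_eq_zero_of_X_pow_dvd {m n : ℕ} {a : PowerSeries K} (h : X ^ m ∣ a) (hn : n < m) :
    coeff n a = 0 := PowerSeries.X_pow_dvd_iff.mp h n hn

lemma X_sq_dvd {φ : PowerSeries K} (h0 : coeff 0 φ = 0) (h1 : coeff 1 φ = 0) :
    (X : PowerSeries K) ^ 2 ∣ φ := by
  rw [PowerSeries.X_pow_dvd_iff]
  intro m hm
  interval_cases m <;> assumption

lemma X_pow_dvd_monomial {φ : PowerSeries K} (h2 : (X : PowerSeries K) ^ 2 ∣ φ) (i j : ℕ) :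
    (X : PowerSeries K) ^ (i + 2 * j) ∣ X ^ i * φ ^ j := by
  rw [pow_add]
  refine mul_dvd_mul dvd_rfl ?_
  rw [pow_mul]
  exact pow_dvd_pow_of_dvd h2 j

lemma coeff_monomial_zero {φ : PowerSeries K} (h2 : (X : PowerSeries K) ^ 2 ∣ φ) {i j n : ℕ}
    (hn : n < i + 2 * j) : coeff n (X ^ i * φ ^ j) = 0 :=
  coeff_eq_zero_of_X_pow_dvd (X_pow_dvd_monomial h2 i j) hn

lemma X_pow_dvd_pow_sub_pow {φ ψ : PowerSeries K} (h2 : (X : PowerSeries K) ^ 2 ∣ φ)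
    (h2' : (X : PowerSeries K) ^ 2 ∣ ψ) {n : ℕ} (hd : (X : PowerSeries K) ^ n ∣ φ - ψ) (j : ℕ) :
    (X : PowerSeries K) ^ (n + 2 * j) ∣ φ ^ (j + 1) - ψ ^ (j + 1) := by
  induction j with
  | zero => simpa using hd
  | succ j ih =>
      have key : φ ^ (j + 1 + 1) - ψ ^ (j + 1 + 1)
          = φ * (φ ^ (j + 1) - ψ ^ (j + 1)) + (φ - ψ) * ψ ^ (j + 1) := by ring
      rw [key]
      refine dvd_add ?_ ?_
      · have : (X : PowerSeries K) ^ (n + 2 * (j + 1)) = X ^ 2 * X ^ (n + 2 * j) := by ring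
        rw [this]; exact mul_dvd_mul h2 ih
      · have : (X : PowerSeries K) ^ (n + 2 * (j + 1)) = X ^ n * (X ^ 2) ^ (j + 1) := by ring
        rw [this]; exact mul_dvd_mul hd (pow_dvd_pow_of_dvd h2' _)

lemma coeff_term_congr {φ ψ : PowerSeries K} (h2 : (X : PowerSeries K) ^ 2 ∣ φ)
    (h2' : (X : PowerSeries K) ^ 2 ∣ ψ) {n : ℕ} (hd : (X : PowerSeries K) ^ n ∣ φ - ψ)
    {i j : ℕ} (hij : 2 ≤ i + j) :
    coeff n (X ^ i * φ ^ j) = coeff n (X ^ i * ψ ^ j) := by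
  cases j with
  | zero => rfl
  | succ j =>
      have hsub : coeff n (X ^ i * φ ^ (j + 1) - X ^ i * ψ ^ (j + 1)) = 0 := by
        have heq : X ^ i * φ ^ (j + 1) - X ^ i * ψ ^ (j + 1)
            = X ^ i * (φ ^ (j + 1) - ψ ^ (j + 1)) := by ring
        rw [heq]
        refine coeff_eq_zero_of_X_pow_dvd (m := i + (n + 2 * j)) ?_ (by omega)
        rw [pow_add]
        exact mul_dvd_mul dvd_rfl (X_pow_dvd_pow_sub_pow h2 h2' hd j)
      rw [map_sub] at hsub
      exact sub_eq_zero.mp hsub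

lemma X_pow_dvd_derivative {m : ℕ} {a : PowerSeries K} (h : (X : PowerSeries K) ^ m ∣ a) :
    (X : PowerSeries K) ^ (m - 1) ∣ (d⁄dX K) a := by
  rw [PowerSeries.X_pow_dvd_iff] at h ⊢
  intro k hk
  rw [PowerSeries.coeff_derivative, h (k + 1) (by omega), zero_mul]

lemma coeff_dterm_congr {φ ψ : PowerSeries K} (h2 : (X : PowerSeries K) ^ 2 ∣ φ)
    (h2' : (X : PowerSeries K) ^ 2 ∣ ψ) {n : ℕ} (hd : (X : PowerSeries K) ^ n ∣ φ - ψ)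
    {i j : ℕ} (hij : 2 ≤ i + j) :
    coeff n ((d⁄dX K) φ * (X ^ i * φ ^ j)) = coeff n ((d⁄dX K) ψ * (X ^ i * ψ ^ j)) := by
  have key : (d⁄dX K) φ * (X ^ i * φ ^ j) - (d⁄dX K) ψ * (X ^ i * ψ ^ j)
      = ((d⁄dX K) φ - (d⁄dX K) ψ) * (X ^ i * φ ^ j)
        + (d⁄dX K) ψ * (X ^ i * (φ ^ j - ψ ^ j)) := by ring
  have hA : coeff n (((d⁄dX K) φ - (d⁄dX K) ψ) * (X ^ i * φ ^ j)) = 0 := by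
    refine coeff_eq_zero_of_X_pow_dvd (m := (n - 1) + (i + 2 * j)) ?_ (by omega)
    rw [pow_add]
    refine mul_dvd_mul ?_ (X_pow_dvd_monomial h2 i j)
    have : (d⁄dX K) φ - (d⁄dX K) ψ = (d⁄dX K) (φ - ψ) := by
      rw [map_sub]
    rw [this]
    exact X_pow_dvd_derivative hd
  have hB : coeff n ((d⁄dX K) ψ * (X ^ i * (φ ^ j - ψ ^ j))) = 0 := by
    cases j with
    | zero => simp
    | succ j =>
        refine coeff_eq_zero_of_X_pow_dvd (m := i + (n + 2 * j)) ?_ (by omega)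
        refine Dvd.dvd.mul_left ?_ _
        rw [pow_add]
        exact mul_dvd_mul dvd_rfl (X_pow_dvd_pow_sub_pow h2 h2' hd j)
  have := sub_eq_zero.mp (by rw [← map_sub, key, map_add, hA, hB, add_zero] :
    coeff n ((d⁄dX K) φ * (X ^ i * φ ^ j)) - coeff n ((d⁄dX K) ψ * (X ^ i * ψ ^ j)) = 0)
  exact this


noncomputable def Sfin (f : MvPowerSeries (Fin 2) K) (φ : PowerSeries K) (n : ℕ) :
    PowerSeries K :=
  ∑ i ∈ Finset.range (n + 1), ∑ j ∈ Finset.range (n + 1),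
    PowerSeries.C (MvPowerSeries.coeff (Finsupp.single 0 i + Finsupp.single 1 j) f) *
      (X ^ i * φ ^ j)

lemma coeff_Sfin (f : MvPowerSeries (Fin 2) K) (φ : PowerSeries K) (n q : ℕ) :
    coeff q (Sfin f φ n) = ∑ i ∈ Finset.range (n + 1), ∑ j ∈ Finset.range (n + 1),
      MvPowerSeries.coeff (Finsupp.single 0 i + Finsupp.single 1 j) f *
        coeff q (X ^ i * φ ^ j) := by
  simp [Sfin, coeff_C_mul]

lemma coeff_mvSubst_eq_Sfin {f : MvPowerSeries (Fin 2) K} {φ : PowerSeries K}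
    (h2 : (X : PowerSeries K) ^ 2 ∣ φ) {q n : ℕ} (hq : q ≤ n) :
    coeff q (mvSubst f X φ) = coeff q (Sfin f φ n) := by
  rw [coeff_Sfin]
  unfold mvSubst
  rw [coeff_mk]
  have step1 : ∀ i : ℕ, (∑ j ∈ Finset.range (n + 1),
      MvPowerSeries.coeff (Finsupp.single 0 i + Finsupp.single 1 j) f *
        coeff q (X ^ i * φ ^ j))
      = ∑ j ∈ Finset.range (q + 1),
      MvPowerSeries.coeff (Finsupp.single 0 i + Finsupp.single 1 j) f *
        coeff q (X ^ i * φ ^ j) := by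
    intro i
    refine (Finset.sum_subset (Finset.range_subset_range.2 (by omega)) fun j _ hj => ?_).symm
    rw [Finset.mem_range, not_lt] at hj
    rw [coeff_monomial_zero h2 (by omega), mul_zero]
  rw [Finset.sum_congr rfl fun i _ => step1 i]
  refine Finset.sum_subset (Finset.range_subset_range.2 (by omega)) fun i _ hi => ?_
  rw [Finset.mem_range, not_lt] at hi
  refine Finset.sum_eq_zero fun j _ => ?_
  rw [coeff_monomial_zero h2 (by omega), mul_zero]

lemma coeff_mul_congr_right {a a' b : PowerSeries K} {n : ℕ}
    (h : ∀ k ≤ n, coeff k a = coeff k a') :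
    coeff n (b * a) = coeff n (b * a') := by
  rw [coeff_mul, coeff_mul]
  refine Finset.sum_congr rfl fun p hp => ?_
  rw [Finset.HasAntidiagonal.mem_antidiagonal] at hp
  rw [h p.2 (by omega)]

lemma coeff_mul_mvSubst {f : MvPowerSeries (Fin 2) K} {φ : PowerSeries K}
    (h2 : (X : PowerSeries K) ^ 2 ∣ φ) (b : PowerSeries K) (n : ℕ) :
    coeff n (b * mvSubst f X φ) = ∑ i ∈ Finset.range (n + 1), ∑ j ∈ Finset.range (n + 1),
      MvPowerSeries.coeff (Finsupp.single 0 i + Finsupp.single 1 j) f *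
        coeff n (b * (X ^ i * φ ^ j)) := by
  rw [coeff_mul_congr_right (a' := Sfin f φ n) fun k hk => coeff_mvSubst_eq_Sfin h2 hk]
  simp only [Sfin, Finset.mul_sum, map_sum]
  refine Finset.sum_congr rfl fun i _ => Finset.sum_congr rfl fun j _ => ?_
  rw [mul_left_comm, coeff_C_mul]

lemma single_coeff_zero {f : MvPowerSeries (Fin 2) K}
    (hf : ∀ I : Fin 2 →₀ ℕ, I 0 + I 1 ≤ 1 → MvPowerSeries.coeff I f = 0)
    {i j : ℕ} (hij : i + j ≤ 1) :
    MvPowerSeries.coeff (Finsupp.single 0 i + Finsupp.single 1 j) f = 0 := by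
  apply hf
  simp [Finsupp.single_apply]
  omega

lemma coeff_mvSubst_congr {f : MvPowerSeries (Fin 2) K}
    (hf : ∀ I : Fin 2 →₀ ℕ, I 0 + I 1 ≤ 1 → MvPowerSeries.coeff I f = 0)
    {φ ψ : PowerSeries K} (h2 : (X : PowerSeries K) ^ 2 ∣ φ)
    (h2' : (X : PowerSeries K) ^ 2 ∣ ψ) {n : ℕ} (hd : (X : PowerSeries K) ^ n ∣ φ - ψ) :
    coeff n (mvSubst f X φ) = coeff n (mvSubst f X ψ) := by
  rw [coeff_mvSubst_eq_Sfin h2 le_rfl, coeff_mvSubst_eq_Sfin h2' le_rfl,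
    coeff_Sfin, coeff_Sfin]
  refine Finset.sum_congr rfl fun i _ => Finset.sum_congr rfl fun j _ => ?_
  by_cases hij : 2 ≤ i + j
  · rw [coeff_term_congr h2 h2' hd hij]
  · rw [single_coeff_zero hf (by omega), zero_mul, zero_mul]

lemma coeff_dsubst_congr {f : MvPowerSeries (Fin 2) K}
    (hf : ∀ I : Fin 2 →₀ ℕ, I 0 + I 1 ≤ 1 → MvPowerSeries.coeff I f = 0)
    {φ ψ : PowerSeries K} (h2 : (X : PowerSeries K) ^ 2 ∣ φ)
    (h2' : (X : PowerSeries K) ^ 2 ∣ ψ) {n : ℕ} (hd : (X : PowerSeries K) ^ n ∣ φ - ψ) :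
    coeff n ((d⁄dX K) φ * mvSubst f X φ) = coeff n ((d⁄dX K) ψ * mvSubst f X ψ) := by
  rw [coeff_mul_mvSubst h2, coeff_mul_mvSubst h2']
  refine Finset.sum_congr rfl fun i _ => Finset.sum_congr rfl fun j _ => ?_
  by_cases hij : 2 ≤ i + j
  · rw [coeff_dterm_congr h2 h2' hd hij]
  · rw [single_coeff_zero hf (by omega), zero_mul, zero_mul]

lemma coeff_mvSubst_small {f : MvPowerSeries (Fin 2) K}
    (hf : ∀ I : Fin 2 →₀ ℕ, I 0 + I 1 ≤ 1 → MvPowerSeries.coeff I f = 0)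
    {φ : PowerSeries K} (h2 : (X : PowerSeries K) ^ 2 ∣ φ) {n : ℕ} (hn : n ≤ 1) :
    coeff n (mvSubst f X φ) = 0 := by
  unfold mvSubst
  rw [coeff_mk]
  refine Finset.sum_eq_zero fun i _ => Finset.sum_eq_zero fun j _ => ?_
  by_cases hij : 2 ≤ i + j
  · rw [coeff_monomial_zero h2 (by omega), mul_zero]
  · rw [single_coeff_zero hf (by omega), zero_mul]

lemma coeff_mul_mvSubst_small {f : MvPowerSeries (Fin 2) K}
    (hf : ∀ I : Fin 2 →₀ ℕ, I 0 + I 1 ≤ 1 → MvPowerSeries.coeff I f = 0)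
    {φ : PowerSeries K} (h2 : (X : PowerSeries K) ^ 2 ∣ φ) (b : PowerSeries K)
    {n : ℕ} (hn : n ≤ 1) :
    coeff n (b * mvSubst f X φ) = 0 := by
  rw [coeff_mul_mvSubst h2]
  refine Finset.sum_eq_zero fun i _ => Finset.sum_eq_zero fun j _ => ?_
  by_cases hij : 2 ≤ i + j
  · rw [coeff_eq_zero_of_X_pow_dvd (m := i + 2 * j)
      (Dvd.dvd.mul_left (X_pow_dvd_monomial h2 i j) b) (by omega), mul_zero]
  · rw [single_coeff_zero hf (by omega), zero_mul]


noncomputable def sol (f₁ f₂ : MvPowerSeries (Fin 2) K) (lam : K) : ℕ → K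
  | n =>
    if n < 2 then 0
    else
      coeff n
        ((d⁄dX K) (PowerSeries.mk fun k => if h : k < n then sol f₁ f₂ lam k else 0) *
            mvSubst f₁ X (PowerSeries.mk fun k => if h : k < n then sol f₁ f₂ lam k else 0) -
          mvSubst f₂ X (PowerSeries.mk fun k => if h : k < n then sol f₁ f₂ lam k else 0)) /
        (lam - (n : K))
  decreasing_by all_goals exact h

noncomputable def psiN (f₁ f₂ : MvPowerSeries (Fin 2) K) (lam : K) (n : ℕ) : PowerSeries K :=
  PowerSeries.mk fun k => if h : k < n then sol f₁ f₂ lam k else 0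

lemma sol_small (f₁ f₂ : MvPowerSeries (Fin 2) K) (lam : K) {n : ℕ} (hn : n < 2) :
    sol f₁ f₂ lam n = 0 := by rw [sol, if_pos hn]

lemma sol_spec (f₁ f₂ : MvPowerSeries (Fin 2) K) (lam : K) {n : ℕ} (hn : ¬ n < 2) :
    sol f₁ f₂ lam n
      = coeff n ((d⁄dX K) (psiN f₁ f₂ lam n) * mvSubst f₁ X (psiN f₁ f₂ lam n)
          - mvSubst f₂ X (psiN f₁ f₂ lam n)) / (lam - (n : K)) := by
  rw [sol, if_neg hn]; rfl

lemma psiN_coeff (f₁ f₂ : MvPowerSeries (Fin 2) K) (lam : K) (n k : ℕ) :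
    coeff k (psiN f₁ f₂ lam n) = if k < n then sol f₁ f₂ lam k else 0 := by
  rw [psiN, coeff_mk]
  split <;> rfl

lemma psiN_sq (f₁ f₂ : MvPowerSeries (Fin 2) K) (lam : K) (n : ℕ) :
    (X : PowerSeries K) ^ 2 ∣ psiN f₁ f₂ lam n := by
  refine X_sq_dvd ?_ ?_ <;>
    · rw [psiN_coeff]
      split
      · exact sol_small _ _ _ (by omega)
      · rfl

lemma phi_sq (f₁ f₂ : MvPowerSeries (Fin 2) K) (lam : K) :
    (X : PowerSeries K) ^ 2 ∣ PowerSeries.mk (sol f₁ f₂ lam) := by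
  refine X_sq_dvd ?_ ?_ <;>
    · rw [coeff_mk]; exact sol_small _ _ _ (by omega)

lemma dvd_sub_psiN {f₁ f₂ : MvPowerSeries (Fin 2) K} {lam : K} {φ' : PowerSeries K} {n : ℕ}
    (hagree : ∀ k, k < n → coeff k φ' = sol f₁ f₂ lam k) :
    (X : PowerSeries K) ^ n ∣ φ' - psiN f₁ f₂ lam n := by
  rw [PowerSeries.X_pow_dvd_iff]
  intro m hm
  rw [map_sub, psiN_coeff, if_pos hm, hagree m hm, sub_self]

lemma coeff_eqn (f₁ f₂ : MvPowerSeries (Fin 2) K) (lam : K) (φ : PowerSeries K) (n : ℕ) :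
    coeff n (C lam * φ + mvSubst f₂ X φ - (d⁄dX K) φ * (X + mvSubst f₁ X φ))
      = (lam - (n : K)) * coeff n φ + coeff n (mvSubst f₂ X φ)
        - coeff n ((d⁄dX K) φ * mvSubst f₁ X φ) := by
  rw [mul_add, map_sub, map_add, map_add, coeff_C_mul]
  have hX : coeff n ((d⁄dX K) φ * X) = (n : K) * coeff n φ := by
    cases n with
    | zero => rw [coeff_zero_mul_X]; simp
    | succ n => rw [coeff_succ_mul_X, PowerSeries.coeff_derivative]; push_cast; ring
  rw [hX]; ring

lemma coeff_solution_char {f₁ f₂ : MvPowerSeries (Fin 2) K} {lam : K}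
    (hf₁ : ∀ I : Fin 2 →₀ ℕ, I 0 + I 1 ≤ 1 → MvPowerSeries.coeff I f₁ = 0)
    (hf₂ : ∀ I : Fin 2 →₀ ℕ, I 0 + I 1 ≤ 1 → MvPowerSeries.coeff I f₂ = 0)
    {φ' : PowerSeries K} (h0 : coeff 0 φ' = 0) (h1 : coeff 1 φ' = 0)
    {n : ℕ} (hn : ¬ n < 2) (hne : lam - (n : K) ≠ 0)
    (hagree : ∀ k, k < n → coeff k φ' = sol f₁ f₂ lam k) :
    coeff n ((d⁄dX K) φ' * mvSubst f₁ X φ') - coeff n (mvSubst f₂ X φ')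
      = (lam - (n : K)) * sol f₁ f₂ lam n := by
  have h2' : (X : PowerSeries K) ^ 2 ∣ φ' := X_sq_dvd h0 h1
  have hdvd := dvd_sub_psiN hagree
  rw [coeff_dsubst_congr hf₁ h2' (psiN_sq f₁ f₂ lam n) hdvd,
    coeff_mvSubst_congr hf₂ h2' (psiN_sq f₁ f₂ lam n) hdvd,
    sol_spec f₁ f₂ lam hn, mul_div_cancel₀ _ hne, map_sub]

end SepAux

/-- Existence and uniqueness of the formal separatrix: if `f₁, f₂` vanish to order `≥ 2`
at the origin and `λ ≠ m` in `K` for every integer `m ≥ 2`, then there is a unique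
`φ ∈ K⟦T⟧` with `φ(0) = φ'(0) = 0` such that
`λ·φ(T) + f₂(T, φ(T)) − φ'(T)·(T + f₁(T, φ(T))) = 0`. -/
theorem formal_separatrix_exists_unique_second
    (K : Type*) [Field K] [CharZero K]
    (f₁ f₂ : MvPowerSeries (Fin 2) K)
    (hf₁ : ∀ I : Fin 2 →₀ ℕ, I 0 + I 1 ≤ 1 → MvPowerSeries.coeff I f₁ = 0)
    (hf₂ : ∀ I : Fin 2 →₀ ℕ, I 0 + I 1 ≤ 1 → MvPowerSeries.coeff I f₂ = 0)
    (lam : K) (hlam : ∀ m : ℕ, 2 ≤ m → lam ≠ (m : K)) :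
    ∃! φ : PowerSeries K, coeff 0 φ = 0 ∧ coeff 1 φ = 0 ∧
      C lam * φ + mvSubst f₂ X φ - (d⁄dX K) φ * (X + mvSubst f₁ X φ) = 0 := by
  have phi0 : coeff 0 (PowerSeries.mk (SepAux.sol f₁ f₂ lam)) = 0 := by
    rw [coeff_mk]; exact SepAux.sol_small _ _ _ (by omega)
  have phi1 : coeff 1 (PowerSeries.mk (SepAux.sol f₁ f₂ lam)) = 0 := by
    rw [coeff_mk]; exact SepAux.sol_small _ _ _ (by omega)
  have heqn : C lam * PowerSeries.mk (SepAux.sol f₁ f₂ lam)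
      + mvSubst f₂ X (PowerSeries.mk (SepAux.sol f₁ f₂ lam))
      - (d⁄dX K) (PowerSeries.mk (SepAux.sol f₁ f₂ lam))
          * (X + mvSubst f₁ X (PowerSeries.mk (SepAux.sol f₁ f₂ lam))) = 0 := by
    ext n
    rw [map_zero, SepAux.coeff_eqn, coeff_mk]
    by_cases hn : n < 2
    · rw [SepAux.sol_small _ _ _ hn,
        SepAux.coeff_mvSubst_small hf₂ (SepAux.phi_sq f₁ f₂ lam) (by omega),
        SepAux.coeff_mul_mvSubst_small hf₁ (SepAux.phi_sq f₁ f₂ lam) _ (by omega)]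
      ring
    · have hne : lam - (n : K) ≠ 0 := sub_ne_zero.mpr (hlam n (by omega))
      have hchar := SepAux.coeff_solution_char hf₁ hf₂ phi0 phi1 hn hne
        (fun k _ => coeff_mk k _)
      linear_combination -hchar
  have key : ∀ φ' : PowerSeries K, coeff 0 φ' = 0 → coeff 1 φ' = 0 →
      (C lam * φ' + mvSubst f₂ X φ' - (d⁄dX K) φ' * (X + mvSubst f₁ X φ') = 0) →
      ∀ n, coeff n φ' = SepAux.sol f₁ f₂ lam n := by
    intro φ' h0 h1 heq n
    induction n using Nat.strong_induction_on with
    | _ n ih =>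
      by_cases hn : n < 2
      · rw [SepAux.sol_small _ _ _ hn]
        interval_cases n <;> assumption
      · have hne : lam - (n : K) ≠ 0 := sub_ne_zero.mpr (hlam n (by omega))
        have hcoeff := congrArg (coeff n) heq
        rw [map_zero, SepAux.coeff_eqn] at hcoeff
        have hchar := SepAux.coeff_solution_char hf₁ hf₂ h0 h1 hn hne ih
        refine mul_left_cancel₀ hne ?_
        linear_combination hcoeff + hchar
  refine ⟨PowerSeries.mk (SepAux.sol f₁ f₂ lam), ⟨phi0, phi1, heqn⟩, ?_⟩
  rintro φ' ⟨h0, h1, heq⟩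
  ext n
  rw [coeff_mk]
  exact key φ' h0 h1 heq n
end

section
/- Let K be a field of characteristic zero, let f₁, f₂ ∈ K[[X₁,X₂]] be formal power series vanishing to order at least 2 at the origin (all coefficients in total degree ≤ 1 vanish), and let λ ∈ K be such that m·λ ≠ 1 in K for every integer m ≥ 2 (this holds in particular when λ is a negative rational number). Then there exists a unique formal power series φ ∈ K[[T]] with φ(0) = φ′(0) = 0 satisfying φ(T) + f₁(φ(T), T) − φ′(T)·(λ·T + f₂(φ(T), T)) = 0 in K[[T]]. -/
open PowerSeries

section Aux
variable {K : Type*} [Field K]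

lemma coeff_mvSubst (f : MvPowerSeries (Fin 2) K) (g h : PowerSeries K) (n : ℕ) :
    coeff n (mvSubst f g h) = ∑ i ∈ Finset.range (n + 1), ∑ j ∈ Finset.range (n + 1),
      MvPowerSeries.coeff (Finsupp.single 0 i + Finsupp.single 1 j) f *
        coeff n (g ^ i * h ^ j) := coeff_mk _ _

lemma single_apply_eval (i j : ℕ) :
    ((Finsupp.single (0 : Fin 2) i + Finsupp.single (1 : Fin 2) j) 0 = i) ∧
    ((Finsupp.single (0 : Fin 2) i + Finsupp.single (1 : Fin 2) j) 1 = j) := by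
  constructor <;> simp [Finsupp.single_apply]

lemma pow_mul_X_pow_coeff_congr (g h : PowerSeries K) (hg : coeff 0 g = 0)
    (hh : coeff 0 h = 0) (n : ℕ) (hgh : ∀ m, m < n → coeff m g = coeff m h)
    {i j : ℕ} (hij : 2 ≤ i + j) {k : ℕ} (hk : k ≤ n) :
    coeff k (g ^ i * X ^ j) = coeff k (h ^ i * X ^ j) := by
  rcases Nat.eq_zero_or_pos i with hi | hi
  · subst hi; rfl
  · have hXg : (X : PowerSeries K) ∣ g := X_dvd_iff.mpr (by simpa using hg)
    have hXh : (X : PowerSeries K) ∣ h := X_dvd_iff.mpr (by simpa using hh)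
    have h1 : (X : PowerSeries K) ^ (i - 1) ∣ ∑ b ∈ Finset.range i, g ^ b * h ^ (i - 1 - b) := by
      refine Finset.dvd_sum fun b hb => ?_
      have hd : (X : PowerSeries K) ^ (b + (i - 1 - b)) ∣ g ^ b * h ^ (i - 1 - b) := by
        rw [pow_add]
        exact mul_dvd_mul (pow_dvd_pow_of_dvd hXg b) (pow_dvd_pow_of_dvd hXh _)
      have heq : b + (i - 1 - b) = i - 1 := by
        have := Finset.mem_range.mp hb; omega
      simpa only [heq] using hd
    have h2 : (X : PowerSeries K) ^ n ∣ g - h :=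
      X_pow_dvd_iff.mpr fun m hm => by simp [hgh m hm]
    have h3 : (X : PowerSeries K) ^ (i - 1 + n + j) ∣ g ^ i * X ^ j - h ^ i * X ^ j := by
      rw [← sub_mul, ← geom_sum₂_mul, pow_add, pow_add]
      exact mul_dvd_mul (mul_dvd_mul h1 h2) dvd_rfl
    have h4 : (X : PowerSeries K) ^ (k + 1) ∣ g ^ i * X ^ j - h ^ i * X ^ j :=
      dvd_trans (pow_dvd_pow _ (by omega)) h3
    have := X_pow_dvd_iff.mp h4 k (Nat.lt_succ_self k)
    rw [map_sub, sub_eq_zero] at this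
    exact this

lemma mvSubst_coeff_congr (f : MvPowerSeries (Fin 2) K)
    (hf : ∀ I : Fin 2 →₀ ℕ, I 0 + I 1 ≤ 1 → MvPowerSeries.coeff I f = 0)
    (g h : PowerSeries K) (hg : coeff 0 g = 0) (hh : coeff 0 h = 0)
    (n : ℕ) (hgh : ∀ m, m < n → coeff m g = coeff m h)
    {k : ℕ} (hk : k ≤ n) :
    coeff k (mvSubst f g X) = coeff k (mvSubst f h X) := by
  rw [coeff_mvSubst, coeff_mvSubst]
  refine Finset.sum_congr rfl fun i _ => Finset.sum_congr rfl fun j _ => ?_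
  by_cases hij : i + j ≤ 1
  · rw [hf _ (by rw [(single_apply_eval i j).1, (single_apply_eval i j).2]; exact hij)]
    simp
  · rw [pow_mul_X_pow_coeff_congr g h hg hh n hgh (by omega) hk]

lemma mvSubst_coeff_low (f : MvPowerSeries (Fin 2) K)
    (hf : ∀ I : Fin 2 →₀ ℕ, I 0 + I 1 ≤ 1 → MvPowerSeries.coeff I f = 0)
    (g : PowerSeries K) (hg : coeff 0 g = 0) {k : ℕ} (hk : k ≤ 1) :
    coeff k (mvSubst f g X) = 0 := by
  rw [coeff_mvSubst]
  refine Finset.sum_eq_zero fun i _ => Finset.sum_eq_zero fun j _ => ?_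
  by_cases hij : i + j ≤ 1
  · rw [hf _ (by rw [(single_apply_eval i j).1, (single_apply_eval i j).2]; exact hij)]
    simp
  · have hXg : (X : PowerSeries K) ∣ g := X_dvd_iff.mpr (by simpa using hg)
    have h3 : (X : PowerSeries K) ^ (i + j) ∣ g ^ i * X ^ j := by
      rw [pow_add]
      exact mul_dvd_mul (pow_dvd_pow_of_dvd hXg i) dvd_rfl
    have h4 : (X : PowerSeries K) ^ (k + 1) ∣ g ^ i * X ^ j :=
      dvd_trans (pow_dvd_pow _ (by omega)) h3
    rw [X_pow_dvd_iff.mp h4 k (Nat.lt_succ_self k), mul_zero]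

end Aux

noncomputable def sepEq {K : Type*} [Field K] (f₁ f₂ : MvPowerSeries (Fin 2) K)
    (lam : K) (φ : PowerSeries K) : PowerSeries K :=
  φ + mvSubst f₁ φ X - (d⁄dX K) φ * (C lam * X + mvSubst f₂ φ X)

section Key
variable {K : Type*} [Field K]

lemma sepEq_coeff_key (f₁ f₂ : MvPowerSeries (Fin 2) K)
    (hf₁ : ∀ I : Fin 2 →₀ ℕ, I 0 + I 1 ≤ 1 → MvPowerSeries.coeff I f₁ = 0)
    (hf₂ : ∀ I : Fin 2 →₀ ℕ, I 0 + I 1 ≤ 1 → MvPowerSeries.coeff I f₂ = 0)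
    (lam : K) (φ ψ : PowerSeries K)
    (hφ0 : coeff 0 φ = 0) (hφ1 : coeff 1 φ = 0)
    (hψ0 : coeff 0 ψ = 0) (hψ1 : coeff 1 ψ = 0)
    (n : ℕ) (hm : ∀ m, m < n → coeff m φ = coeff m ψ) :
    coeff n (sepEq f₁ f₂ lam φ) =
      coeff n (sepEq f₁ f₂ lam ψ) + (1 - (n : K) * lam) * (coeff n φ - coeff n ψ) := by
  set P := C lam * X + mvSubst f₂ φ X with hP
  set Q := C lam * X + mvSubst f₂ ψ X with hQ
  have hA1 : coeff n (mvSubst f₁ φ X) = coeff n (mvSubst f₁ ψ X) :=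
    mvSubst_coeff_congr f₁ hf₁ φ ψ hφ0 hψ0 n hm (le_refl n)
  have hPQ : ∀ k, k ≤ n → coeff k P = coeff k Q := by
    intro k hk
    rw [hP, hQ, map_add, map_add, mvSubst_coeff_congr f₂ hf₂ φ ψ hφ0 hψ0 n hm hk]
  have hP0 : coeff 0 P = 0 := by
    rw [hP, map_add, mvSubst_coeff_low f₂ hf₂ φ hφ0 (by norm_num)]
    simp
  have hP1 : coeff 1 P = lam := by
    rw [hP, map_add, mvSubst_coeff_low f₂ hf₂ φ hφ0 (le_refl 1)]
    simp
  have hprod2 : coeff n ((d⁄dX K) ψ * (P - Q)) = 0 := by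
    have hdvd : (X : PowerSeries K) ^ (n + 1) ∣ P - Q :=
      X_pow_dvd_iff.mpr fun m hm' => by
        rw [map_sub, hPQ m (by omega), sub_self]
    exact X_pow_dvd_iff.mp (hdvd.mul_left _) n (Nat.lt_succ_self n)
  have hdelta : ∀ m, m < n → coeff m (φ - ψ) = 0 := fun m hm' => by
    rw [map_sub, hm m hm', sub_self]
  have hprod1 : coeff n ((d⁄dX K) (φ - ψ) * P) =
      (n : K) * lam * (coeff n φ - coeff n ψ) := by
    rw [coeff_mul]
    rcases n with _ | n'
    · simp [hP0]
    · rw [Finset.sum_eq_single_of_mem (n', 1)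
        (by rw [Finset.HasAntidiagonal.mem_antidiagonal])]
      · rw [coeff_derivative, hP1, map_sub]
        push_cast
        ring
      · rintro ⟨a, b⟩ hmem hne
        rw [Finset.HasAntidiagonal.mem_antidiagonal] at hmem
        simp only at hmem
        rcases Nat.lt_or_ge b 2 with hb | hb
        · interval_cases b
          · rw [show a = n' + 1 by omega] at hne ⊢
            rw [hP0, mul_zero]
          · exact absurd (by omega : a = n') (by simpa using fun h => by simp [h] at hne)
        · have : a + 1 < n' + 1 := by omega
          rw [coeff_derivative, hdelta (a + 1) this, zero_mul, zero_mul]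
  -- assemble
  have hsplit : (d⁄dX K) φ * P =
      (d⁄dX K) (φ - ψ) * P + ((d⁄dX K) ψ * (P - Q) + (d⁄dX K) ψ * Q) := by
    rw [map_sub]; ring
  have e1 : coeff n (sepEq f₁ f₂ lam φ) =
      coeff n φ + coeff n (mvSubst f₁ φ X) - coeff n ((d⁄dX K) φ * P) := by
    rw [sepEq]; rw [map_sub, map_add]
  have e2 : coeff n (sepEq f₁ f₂ lam ψ) =
      coeff n ψ + coeff n (mvSubst f₁ ψ X) - coeff n ((d⁄dX K) ψ * Q) := by
    rw [sepEq]; rw [map_sub, map_add]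
  rw [e1, e2, hsplit, map_add, map_add, hprod1, hprod2, hA1]
  ring

end Key

noncomputable def sepC {K : Type*} [Field K] (f₁ f₂ : MvPowerSeries (Fin 2) K)
    (lam : K) : ℕ → K
  | n =>
    if n < 2 then 0
    else - coeff n (sepEq f₁ f₂ lam
        (PowerSeries.mk fun m => if h : m < n then sepC f₁ f₂ lam m else 0)) / (1 - (n : K) * lam)
decreasing_by exact h

section Main
variable {K : Type*} [Field K]

lemma sepEq_zero_coeff_low (f₁ f₂ : MvPowerSeries (Fin 2) K)
    (hf₁ : ∀ I : Fin 2 →₀ ℕ, I 0 + I 1 ≤ 1 → MvPowerSeries.coeff I f₁ = 0)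
    (lam : K) {k : ℕ} (hk : k ≤ 1) :
    coeff k (sepEq f₁ f₂ lam 0) = 0 := by
  rw [sepEq]
  simp only [map_zero, zero_mul, sub_zero, zero_add]
  exact mvSubst_coeff_low f₁ hf₁ 0 (by simp) hk

theorem formal_separatrix_aux
    (K : Type*) [Field K] [CharZero K]
    (f₁ f₂ : MvPowerSeries (Fin 2) K)
    (hf₁ : ∀ I : Fin 2 →₀ ℕ, I 0 + I 1 ≤ 1 → MvPowerSeries.coeff I f₁ = 0)
    (hf₂ : ∀ I : Fin 2 →₀ ℕ, I 0 + I 1 ≤ 1 → MvPowerSeries.coeff I f₂ = 0)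
    (lam : K) (hlam : ∀ m : ℕ, 2 ≤ m → (m : K) * lam ≠ 1) :
    ∃! φ : PowerSeries K, coeff 0 φ = 0 ∧ coeff 1 φ = 0 ∧
      φ + mvSubst f₁ φ X - (d⁄dX K) φ * (C lam * X + mvSubst f₂ φ X) = 0 := by
  have hne : ∀ n : ℕ, 2 ≤ n → (1 - (n : K) * lam) ≠ 0 := fun n hn =>
    sub_ne_zero.mpr (Ne.symm (hlam n hn))
  set c : ℕ → K := sepC f₁ f₂ lam with hc
  have hc0 : c 0 = 0 := by rw [hc, sepC]; norm_num
  have hc1 : c 1 = 0 := by rw [hc, sepC]; norm_num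
  set φ : PowerSeries K := PowerSeries.mk c with hφ
  have hφc : ∀ m, coeff m φ = c m := fun m => coeff_mk m c
  -- the truncations
  have hψprop : ∀ n : ℕ,
      coeff n (sepEq f₁ f₂ lam φ) =
        coeff n (sepEq f₁ f₂ lam
          (PowerSeries.mk fun m => if h : m < n then c m else 0)) + (1 - (n : K) * lam) * c n := by
    intro n
    set ψ : PowerSeries K := PowerSeries.mk fun m => if h : m < n then c m else 0 with hψ
    have hψm : ∀ m, coeff m ψ = if h : m < n then c m else 0 := fun m => coeff_mk m _
    have hψ0 : coeff 0 ψ = 0 := by rw [hψm]; split <;> simp [hc0]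
    have hψ1 : coeff 1 ψ = 0 := by rw [hψm]; split <;> simp [hc1]
    have hψn : coeff n ψ = 0 := by rw [hψm]; simp
    have := sepEq_coeff_key f₁ f₂ hf₁ hf₂ lam φ ψ (by rw [hφc, hc0]) (by rw [hφc, hc1])
      hψ0 hψ1 n (fun m hm => by rw [hφc, hψm, dif_pos hm])
    rw [this, hψn, hφc, sub_zero]
  have hEφ : sepEq f₁ f₂ lam φ = 0 := by
    ext n
    rw [map_zero, hψprop n]
    rcases Nat.lt_or_ge n 2 with hn | hn
    · have hψeq : (PowerSeries.mk fun m => if h : m < n then c m else 0) = (0 : PowerSeries K) := by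
        ext k
        rw [coeff_mk, map_zero]
        split
        · rename_i hkn
          rcases (by omega : k = 0 ∨ k = 1) with h | h <;> subst h
          · exact hc0
          · exact hc1
        · rfl
      have hcn : c n = 0 := by
        rw [hc, sepC]
        rw [if_pos hn]
      rw [hψeq, hcn, mul_zero, add_zero]
      exact sepEq_zero_coeff_low f₁ f₂ hf₁ lam (by omega)
    · have hcn : c n = - coeff n (sepEq f₁ f₂ lam
          (PowerSeries.mk fun m => if h : m < n then c m else 0)) / (1 - (n : K) * lam) := by
        rw [hc, sepC]
        rw [if_neg (by omega)]
      rw [hcn]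
      have h0 := hne n hn
      field_simp
      ring
  -- uniqueness helper
  have huniq : ∀ φ₁ φ₂ : PowerSeries K,
      (coeff 0 φ₁ = 0 ∧ coeff 1 φ₁ = 0 ∧ sepEq f₁ f₂ lam φ₁ = 0) →
      (coeff 0 φ₂ = 0 ∧ coeff 1 φ₂ = 0 ∧ sepEq f₁ f₂ lam φ₂ = 0) → φ₁ = φ₂ := by
    rintro φ₁ φ₂ ⟨h10, h11, h1e⟩ ⟨h20, h21, h2e⟩
    ext n
    induction n using Nat.strong_induction_on with
    | _ n ih =>
      have := sepEq_coeff_key f₁ f₂ hf₁ hf₂ lam φ₁ φ₂ h10 h11 h20 h21 n ih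
      rw [h1e, h2e, map_zero, zero_add] at this
      rcases Nat.lt_or_ge n 2 with hn | hn
      · interval_cases n
        · rw [h10, h20]
        · rw [h11, h21]
      · have := (mul_eq_zero.mp this.symm).resolve_left (hne n hn)
        exact sub_eq_zero.mp this
  refine ⟨φ, ⟨by rw [hφc, hc0], by rw [hφc, hc1], hEφ⟩, ?_⟩
  intro ψ hψ
  exact huniq ψ φ hψ ⟨by rw [hφc, hc0], by rw [hφc, hc1], hEφ⟩

end Main

/-- Existence and uniqueness of the formal separatrix: if `f₁, f₂` vanish to order `≥ 2`
at the origin and `m·λ ≠ 1` in `K` for every integer `m ≥ 2`, then there is a unique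
`φ ∈ K⟦T⟧` with `φ(0) = φ'(0) = 0` such that
`φ(T) + f₁(φ(T), T) − φ'(T)·(λ·T + f₂(φ(T), T)) = 0`. -/
theorem formal_separatrix_exists_unique_first
    (K : Type*) [Field K] [CharZero K]
    (f₁ f₂ : MvPowerSeries (Fin 2) K)
    (hf₁ : ∀ I : Fin 2 →₀ ℕ, I 0 + I 1 ≤ 1 → MvPowerSeries.coeff I f₁ = 0)
    (hf₂ : ∀ I : Fin 2 →₀ ℕ, I 0 + I 1 ≤ 1 → MvPowerSeries.coeff I f₂ = 0)
    (lam : K) (hlam : ∀ m : ℕ, 2 ≤ m → (m : K) * lam ≠ 1) :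
    ∃! φ : PowerSeries K, coeff 0 φ = 0 ∧ coeff 1 φ = 0 ∧
      φ + mvSubst f₁ φ X - (d⁄dX K) φ * (C lam * X + mvSubst f₂ φ X) = 0 := by
  exact formal_separatrix_aux K f₁ f₂ hf₁ hf₂ lam hlam
end

section
/- Let p be an odd prime and let 0 < r ≤ 1 be a real number. Let B ∈ K[[X]] be a formal power series with B(0) = 0 and ‖B‖_r ≤ p^{−2/(p−1)}. Then the formal composition exp(B) of the exponential series exp(X) = ∑_{n≥0} X^n/n! with B satisfies ‖exp(B)‖_r = 1; more precisely, every coefficient of exp(B) satisfies |coeff_n(exp(B))|·r^n ≤ 1, and the constant coefficient of exp(B) equals 1. -/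
open PowerSeries

/-- The formal composition `exp(B) = ∑_{m ≥ 0} B^m/m!` of the exponential series with a
power series `B` having vanishing constant coefficient: since `B^m` has order `≥ m`, the
coefficient of `X^n` only receives contributions from `m ≤ n`. -/
noncomputable def expComp {K : Type*} [Field K] (B : PowerSeries K) : PowerSeries K :=
  PowerSeries.mk fun n =>
    ∑ m ∈ Finset.range (n + 1), (m.factorial : K)⁻¹ * PowerSeries.coeff n (B ^ m)

/-- If `B(0) = 0` and `‖B‖_r ≤ p^{−2/(p−1)}` for some `0 < r ≤ 1`, then
`‖exp(B)‖_r = 1`: every coefficient satisfies `|coeff_n(exp B)|·r^n ≤ 1` and the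
constant coefficient of `exp(B)` is `1`. -/
theorem gauss_norm_exp_eq_one
    (p : ℕ) (hp : p.Prime) (hodd : Odd p)
    (K : Type*) [NormedField K] [CompleteSpace K] [IsUltrametricDist K]
    (hnorm : ∀ n : ℕ, n ≠ 0 → ‖(n : K)‖ = (p : ℝ) ^ (-(padicValNat p n : ℤ)))
    (r : ℝ) (hr0 : 0 < r) (hr1 : r ≤ 1)
    (B : PowerSeries K) (hB0 : coeff 0 B = 0)
    (hB : ∀ n : ℕ, ‖coeff n B‖ * r ^ n ≤ (p : ℝ) ^ (-2 / ((p : ℝ) - 1))) :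
    coeff 0 (expComp B) = 1 ∧
    (∀ n : ℕ, ‖coeff n (expComp B)‖ * r ^ n ≤ 1) ∧
    (⨆ n : ℕ, ‖coeff n (expComp B)‖ * r ^ n) = 1 := by
  haveI : Fact p.Prime := ⟨hp⟩
  have hp1 : (1:ℝ) < (p:ℝ) := by exact_mod_cast hp.one_lt
  have hp0 : (0:ℝ) < (p:ℝ) := lt_trans one_pos hp1
  have hps : (0:ℝ) < (p:ℝ) - 1 := by linarith
  set c : ℝ := (p : ℝ) ^ (-2 / ((p : ℝ) - 1)) with hc
  have hc0 : 0 ≤ c := Real.rpow_nonneg hp0.le _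
  -- coefficient bound for powers of B
  have key : ∀ m n : ℕ, ‖coeff n (B ^ m)‖ * r ^ n ≤ c ^ m := by
    intro m
    induction m with
    | zero =>
      intro n
      simp only [pow_zero, PowerSeries.coeff_one]
      rcases eq_or_ne n 0 with rfl | hn
      · simp
      · simp [hn, (pow_pos hr0 n).le]
    | succ m ih =>
      intro n
      rw [pow_succ, PowerSeries.coeff_mul, ← le_div_iff₀ (pow_pos hr0 n)]
      apply IsUltrametricDist.norm_sum_le_of_forall_le_of_nonneg
        (div_nonneg (pow_nonneg hc0 _) (pow_pos hr0 n).le)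
      rintro ⟨i, j⟩ hij
      rw [Finset.HasAntidiagonal.mem_antidiagonal] at hij
      rw [le_div_iff₀ (pow_pos hr0 n), ← hij, pow_add, pow_succ]
      calc ‖coeff i (B ^ m) * coeff j B‖ * (r ^ i * r ^ j)
          ≤ (‖coeff i (B ^ m)‖ * ‖coeff j B‖) * (r ^ i * r ^ j) := by
            have := norm_mul_le (coeff i (B ^ m)) (coeff j B)
            exact mul_le_mul_of_nonneg_right this (by positivity)
        _ = (‖coeff i (B ^ m)‖ * r ^ i) * (‖coeff j B‖ * r ^ j) := by ring
        _ ≤ c ^ m * c := by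
            apply mul_le_mul (ih i) (hB j) (by positivity) (pow_nonneg hc0 _)
  -- factorial norm bound
  have hfact : ∀ m : ℕ, ‖((m.factorial : K))⁻¹‖ ≤ (p : ℝ) ^ ((m : ℝ) / ((p : ℝ) - 1)) := by
    intro m
    have hne : (m.factorial : K) ≠ 0 := by
      intro h
      have := hnorm m.factorial m.factorial_ne_zero
      rw [h, norm_zero] at this
      have : (0:ℝ) < (p:ℝ) ^ (-(padicValNat p m.factorial : ℤ)) := by positivity
      linarith [(hnorm m.factorial m.factorial_ne_zero).symm]
    rw [norm_inv, hnorm m.factorial m.factorial_ne_zero]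
    set v : ℕ := padicValNat p m.factorial with hv
    have h1 : ((p:ℝ) ^ (-(v:ℤ)))⁻¹ = (p:ℝ) ^ ((v:ℝ)) := by
      rw [zpow_neg, inv_inv, zpow_natCast, ← Real.rpow_natCast]
    rw [h1]
    apply Real.rpow_le_rpow_of_exponent_le hp1.le
    rw [le_div_iff₀ hps]
    have hleg : (p - 1) * v ≤ m := by
      rw [hv, sub_one_mul_padicValNat_factorial]
      exact Nat.sub_le _ _
    have : ((p - 1) * v : ℕ) ≤ (m : ℕ) := hleg
    have h2 : ((p:ℝ) - 1) * (v:ℝ) ≤ (m:ℝ) := by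
      have := (Nat.cast_le (α := ℝ)).mpr hleg
      push_cast [Nat.cast_sub hp.one_lt.le] at this
      linarith
    linarith
  -- bound on each term of expComp
  have hterm : ∀ m n : ℕ, ‖(m.factorial : K)⁻¹ * coeff n (B ^ m)‖ * r ^ n ≤ 1 := by
    intro m n
    calc ‖(m.factorial : K)⁻¹ * coeff n (B ^ m)‖ * r ^ n
        ≤ (‖(m.factorial : K)⁻¹‖ * ‖coeff n (B ^ m)‖) * r ^ n := by
          exact mul_le_mul_of_nonneg_right (norm_mul_le _ _) (by positivity)
      _ = ‖(m.factorial : K)⁻¹‖ * (‖coeff n (B ^ m)‖ * r ^ n) := by ring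
      _ ≤ (p : ℝ) ^ ((m : ℝ) / ((p : ℝ) - 1)) * c ^ m := by
          apply mul_le_mul (hfact m) (key m n) (by positivity) (by positivity)
      _ = (p : ℝ) ^ ((m : ℝ) / ((p : ℝ) - 1) + (-2 / ((p : ℝ) - 1)) * (m:ℝ)) := by
          rw [hc, ← Real.rpow_natCast ((p:ℝ) ^ (-2 / ((p : ℝ) - 1))) m,
            ← Real.rpow_mul hp0.le, ← Real.rpow_add hp0]
      _ ≤ 1 := by
          apply Real.rpow_le_one_of_one_le_of_nonpos hp1.le
          have hm : (0:ℝ) ≤ (m:ℝ) := Nat.cast_nonneg m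
          have heq : (m:ℝ)/((p:ℝ)-1) + (-2/((p:ℝ)-1))*(m:ℝ) = -(m:ℝ)/((p:ℝ)-1) := by
            ring
          rw [heq]
          apply div_nonpos_of_nonpos_of_nonneg <;> linarith
  have hcoeff : ∀ n : ℕ, ‖coeff n (expComp B)‖ * r ^ n ≤ 1 := by
    intro n
    rw [expComp, PowerSeries.coeff_mk, ← le_div_iff₀ (pow_pos hr0 n)]
    apply IsUltrametricDist.norm_sum_le_of_forall_le_of_nonneg
      (by positivity)
    intro m _
    rw [le_div_iff₀ (pow_pos hr0 n)]
    exact hterm m n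
  have h0 : coeff 0 (expComp B) = 1 := by
    simp [expComp]
  refine ⟨h0, hcoeff, ?_⟩
  apply le_antisymm
  · exact ciSup_le hcoeff
  · have := le_ciSup (f := fun n => ‖coeff n (expComp B)‖ * r ^ n) ⟨1, Set.forall_mem_range.mpr hcoeff⟩ 0
    simpa [h0] using this
end

section
/- Let p be a prime, let 0 < r ≤ 1 be a real number, let (c_m)_{m≥2} be a family of formal power series in K[[X]] with ‖c_m‖_r ≤ 1/p for every m ≥ 2, and let y ∈ K[[X]] be a formal power series with y(0) = 0 and ‖y‖_r ≤ r. Then the series ∑_{m≥2} m·c_m·y^{m−1} converges coefficientwise in K[[X]] (since y^{m−1} has order ≥ m−1), and the resulting formal power series g := ∑_{m≥2} m·c_m·y^{m−1} satisfies ‖g‖_r ≤ r/p. -/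
open PowerSeries

/-- The coefficientwise-convergent sum `∑_{m ≥ 2} m·c_m·y^{m−1}`: since `y` has vanishing
constant coefficient, `y^{m−1}` has order `≥ m − 1`, so the coefficient of `X^n` only
receives contributions from `2 ≤ m ≤ n + 1`. -/
noncomputable def derivSeriesSum {K : Type*} [Field K] (c : ℕ → PowerSeries K)
    (y : PowerSeries K) : PowerSeries K :=
  PowerSeries.mk fun n =>
    ∑ m ∈ Finset.Icc 2 (n + 1), PowerSeries.coeff n ((m : K) • (c m * y ^ (m - 1)))

lemma gauss_mul_bound {K : Type*} [NormedField K] [IsUltrametricDist K]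
    {r A B : ℝ} (hr0 : 0 < r) (hA : 0 ≤ A) (hB : 0 ≤ B)
    {f g : PowerSeries K}
    (hf : ∀ i, ‖coeff i f‖ * r ^ i ≤ A) (hg : ∀ j, ‖coeff j g‖ * r ^ j ≤ B)
    (n : ℕ) : ‖coeff n (f * g)‖ * r ^ n ≤ A * B := by
  rw [← le_div_iff₀ (pow_pos hr0 n), PowerSeries.coeff_mul]
  refine IsUltrametricDist.norm_sum_le_of_forall_le_of_nonneg
    (div_nonneg (mul_nonneg hA hB) (pow_pos hr0 n).le) ?_
  rintro ⟨i, j⟩ hij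
  have hij' : i + j = n := Finset.HasAntidiagonal.mem_antidiagonal.mp hij
  rw [le_div_iff₀ (pow_pos hr0 n), norm_mul, ← hij', pow_add]
  calc ‖coeff i f‖ * ‖coeff j g‖ * (r ^ i * r ^ j)
      = (‖coeff i f‖ * r ^ i) * (‖coeff j g‖ * r ^ j) := by ring
    _ ≤ A * B := mul_le_mul (hf i) (hg j)
        (mul_nonneg (norm_nonneg _) (pow_pos hr0 j).le) hA

lemma gauss_pow_bound {K : Type*} [NormedField K] [IsUltrametricDist K]
    {r : ℝ} (hr0 : 0 < r) {y : PowerSeries K}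
    (hy : ∀ n, ‖coeff n y‖ * r ^ n ≤ r) (k : ℕ) (n : ℕ) :
    ‖coeff n (y ^ k)‖ * r ^ n ≤ r ^ k := by
  induction k generalizing n with
  | zero =>
    simp only [pow_zero]
    rcases Nat.eq_zero_or_pos n with rfl | hn
    · simp
    · rw [PowerSeries.coeff_one, if_neg hn.ne']
      simp [(pow_pos hr0 n).le]
  | succ k ih =>
    rw [pow_succ, pow_succ]
    exact gauss_mul_bound hr0 (pow_pos hr0 k).le hr0.le ih hy n

/-- Estimate from Step 3 of the proof of Proposition 3.1: if `‖c_m‖_r ≤ 1/p` for all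
`m ≥ 2`, and `y(0) = 0` with `‖y‖_r ≤ r` (`0 < r ≤ 1`), then the coefficientwise sum
`g = ∑_{m≥2} m·c_m·y^{m−1}` converges (for fixed `n`, the terms with `m > n + 1` have
vanishing `n`-th coefficient) and satisfies `‖g‖_r ≤ r/p`. -/
theorem gauss_norm_partial_deriv_bound
    (p : ℕ) (hp : p.Prime)
    (K : Type*) [NormedField K] [CompleteSpace K] [IsUltrametricDist K]
    (hnorm : ∀ n : ℕ, n ≠ 0 → ‖(n : K)‖ = (p : ℝ) ^ (-(padicValNat p n : ℤ)))
    (r : ℝ) (hr0 : 0 < r) (hr1 : r ≤ 1)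
    (c : ℕ → PowerSeries K)
    (hc : ∀ m : ℕ, 2 ≤ m → ∀ n : ℕ, ‖coeff n (c m)‖ * r ^ n ≤ 1 / p)
    (y : PowerSeries K) (hy0 : coeff 0 y = 0)
    (hy : ∀ n : ℕ, ‖coeff n y‖ * r ^ n ≤ r) :
    (∀ n m : ℕ, 2 ≤ m → n + 1 < m →
        coeff n ((m : K) • (c m * y ^ (m - 1))) = 0) ∧
    (∀ n : ℕ, ‖coeff n (derivSeriesSum c y)‖ * r ^ n ≤ r / p) := by
  have hp0 : (0 : ℝ) < p := by exact_mod_cast hp.pos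
  -- vanishing of high-order terms
  have hXdvd : (PowerSeries.X : PowerSeries K) ∣ y := by
    rw [PowerSeries.X_dvd_iff]
    exact (PowerSeries.coeff_zero_eq_constantCoeff (R:=K)) ▸ hy0
  have hvanish : ∀ n m : ℕ, 2 ≤ m → n + 1 < m →
      coeff n ((m : K) • (c m * y ^ (m - 1))) = 0 := by
    intro n m hm hnm
    have hpow : (PowerSeries.X : PowerSeries K) ^ (m - 1) ∣ y ^ (m - 1) :=
      pow_dvd_pow_of_dvd hXdvd _
    have hdvd : (PowerSeries.X : PowerSeries K) ^ (m - 1) ∣ c m * y ^ (m - 1) :=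
      Dvd.dvd.mul_left hpow _
    have hzero : coeff n (c m * y ^ (m - 1)) = 0 :=
      (PowerSeries.X_pow_dvd_iff.mp hdvd) n (by omega)
    rw [map_smul, hzero, smul_zero]
  refine ⟨hvanish, fun n => ?_⟩
  -- bound per term
  have hterm : ∀ m ∈ Finset.Icc 2 (n + 1),
      ‖coeff n ((m : K) • (c m * y ^ (m - 1)))‖ ≤ (r / p) / r ^ n := by
    intro m hm
    obtain ⟨hm2, _⟩ := Finset.mem_Icc.mp hm
    have hmK : ‖(m : K)‖ ≤ 1 := by
      rw [hnorm m (by omega)]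
      apply zpow_le_one_of_nonpos₀
      · exact_mod_cast hp.one_lt.le
      · simp
    have hprod : ‖coeff n (c m * y ^ (m - 1))‖ * r ^ n ≤ (1 / p) * r ^ (m - 1) :=
      gauss_mul_bound hr0 (by positivity) (pow_pos hr0 _).le
        (hc m hm2) (gauss_pow_bound hr0 hy (m - 1)) n
    have hrm : r ^ (m - 1) ≤ r := by
      calc r ^ (m - 1) ≤ r ^ 1 := pow_le_pow_of_le_one hr0.le hr1 (by omega)
        _ = r := pow_one r
    rw [le_div_iff₀ (pow_pos hr0 n), map_smul, norm_smul]
    calc ‖(m : K)‖ * ‖coeff n (c m * y ^ (m - 1))‖ * r ^ n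
        ≤ 1 * ((1 / p) * r ^ (m - 1)) := by
          rw [mul_assoc]
          exact mul_le_mul hmK hprod (by positivity) zero_le_one
      _ = (1 / p) * r ^ (m - 1) := one_mul _
      _ ≤ (1 / p) * r := by
          exact mul_le_mul_of_nonneg_left hrm (by positivity)
      _ = r / p := by ring
  have : ‖coeff n (derivSeriesSum c y)‖ ≤ (r / p) / r ^ n := by
    rw [derivSeriesSum, PowerSeries.coeff_mk]
    exact IsUltrametricDist.norm_sum_le_of_forall_le_of_nonneg (by positivity) hterm
  calc ‖coeff n (derivSeriesSum c y)‖ * r ^ n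
      ≤ ((r / p) / r ^ n) * r ^ n := mul_le_mul_of_nonneg_right this (pow_pos hr0 n).le
    _ = r / p := div_mul_cancel₀ _ (pow_pos hr0 n).ne'
end
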